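/- arXiv:math/0512067 — 5 statements merged into one kernel-verified Lean document; each statement's English description precedes it below -/
import Mathlib

section
/- Let w ∈ 𝔽∖{e} and let π be a strong congruence of the word-graph Γ_w. If Γ_w/π has a path P such that at most one vertex of P belongs to other paths of Γ_w/π, then some cyclic permutation of the symbols of w is of the form vx, where x ∈ {g_r g_r^*, g_r^* g_r : r∈[s]} ∪ {g_r^{d_r}, (g_r^*)^{d_r} : r∈[s], d_r < ∞}. -/
noncomputable section

open Filter Topology

/-- A finite, directed, edge-colored graph with colors in `Fin s`,
with vertices living in an ambient type `V`. -/
structure CGraph (V : Type) (s : ℕ) where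
  verts : Set V
  finite : verts.Finite
  nonem : verts.Nonempty
  E : Fin s → V → V → Prop
  memL : ∀ r a b, E r a b → a ∈ verts
  memR : ∀ r a b, E r a b → b ∈ verts

namespace CGraph

variable {V W : Type} {s : ℕ}

/-- A graph is trivial iff it has no edges (of any color). -/
def Trivial (Γ : CGraph V s) : Prop := ∀ r a b, ¬ Γ.E r a b

/-- Two vertices are adjacent iff there is an edge (of any color, either direction)
between them. -/
def Adj (Γ : CGraph V s) (a b : V) : Prop := ∃ r, Γ.E r a b ∨ Γ.E r b a

/-- A graph is connected iff any two of its vertices are joined by a finite chain of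
edges (of any colors and either direction). -/
def Connected (Γ : CGraph V s) : Prop :=
  ∀ a ∈ Γ.verts, ∀ b ∈ Γ.verts, Relation.ReflTransGen Γ.Adj a b

/-- `Γ'` is a subgraph of `Γ`. -/
def Subgraph (Γ' Γ : CGraph V s) : Prop :=
  Γ'.verts ⊆ Γ.verts ∧ ∀ r a b, Γ'.E r a b → Γ.E r a b

/-- `C` is a connected component of `Γ`: a maximal connected subgraph. -/
def IsComponent (C Γ : CGraph V s) : Prop :=
  C.Subgraph Γ ∧ C.Connected ∧
    ∀ C' : CGraph V s, C'.Subgraph Γ → C'.Connected → C.Subgraph C' → C'.Subgraph C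

/-- A graph is admissible iff no two distinct edges of the same color begin at the
same vertex or end at the same vertex. -/
def Admissible (Γ : CGraph V s) : Prop :=
  (∀ r a b b', Γ.E r a b → Γ.E r a b' → b = b') ∧
    (∀ r a a' b, Γ.E r a b → Γ.E r a' b → a = a')

/-- `Γ.mono r` is `Γ` with all edges not of color `r` removed. -/
def mono (Γ : CGraph V s) (r : Fin s) : CGraph V s where
  verts := Γ.verts
  finite := Γ.finite
  nonem := Γ.nonem
  E := fun r' a b => r' = r ∧ Γ.E r' a b
  memL := fun r' a b h => Γ.memL r' a b h.2
  memR := fun r' a b h => Γ.memR r' a b h.2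

/-- An `r`-path of `Γ` is a non-trivial connected component of `Γ.mono r`. -/
def IsRPath (P Γ : CGraph V s) (r : Fin s) : Prop :=
  P.IsComponent (Γ.mono r) ∧ ¬ P.Trivial

/-- A path of `Γ` is an `r`-path for some color `r`. -/
def IsPathOf (P Γ : CGraph V s) : Prop := ∃ r, P.IsRPath Γ r

/-- A path is closed (a closed circuit) iff every one of its vertices has an
outgoing edge. -/
def Closed (P : CGraph V s) : Prop := ∀ a ∈ P.verts, ∃ r b, P.E r a b

/-- A loop of `Γ` is a path of `Γ` which is a closed circuit. -/
def IsLoopOf (P Γ : CGraph V s) : Prop := P.IsPathOf Γ ∧ P.Closed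

/-- A string of `Γ` is a path of `Γ` which is not a loop. -/
def IsStringOf (P Γ : CGraph V s) : Prop := P.IsPathOf Γ ∧ ¬ P.Closed

/-- The number of edges of `Γ` (counting colors). -/
def edgeCount (Γ : CGraph V s) : ℕ :=
  Nat.card {p : Fin s × V × V // Γ.E p.1 p.2.1 p.2.2}

/-- The number of loops (of any color) of `Γ`. -/
def loopCount (Γ : CGraph V s) : ℕ :=
  Nat.card {P : CGraph V s // P.IsLoopOf Γ}

/-- The number of vertices of `Γ`. -/
def vertCount (Γ : CGraph V s) : ℕ := Nat.card Γ.verts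

/-- The loop-characteristic `χ(Γ) = V(Γ) - E(Γ) + L(Γ)`. -/
def chi (Γ : CGraph V s) : ℤ :=
  (Γ.vertCount : ℤ) - (Γ.edgeCount : ℤ) + (Γ.loopCount : ℤ)

/-- `Γ.erase P` is the graph obtained from `Γ` by removing all edges of `P`. -/
def erase (Γ P : CGraph V s) : CGraph V s where
  verts := Γ.verts
  finite := Γ.finite
  nonem := Γ.nonem
  E := fun r a b => Γ.E r a b ∧ ¬ P.E r a b
  memL := fun r a b h => Γ.memL r a b h.1
  memR := fun r a b h => Γ.memR r a b h.1

/-- A graph is strongly admissible (w.r.t. `d : Fin s → ℕ∞`) iff it is admissible,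
every `r`-loop has length `d r`, and every `r`-string has length `< d r`. -/
def StronglyAdmissible (d : Fin s → ℕ∞) (Γ : CGraph V s) : Prop :=
  Γ.Admissible ∧ ∀ r P, IsRPath P Γ r →
    (P.Closed → (P.edgeCount : ℕ∞) = d r) ∧ (¬ P.Closed → (P.edgeCount : ℕ∞) < d r)

/-- The quotient of `Γ` by a partition (setoid) `π` of the ambient vertex type. -/
def quot (Γ : CGraph V s) (π : Setoid V) : CGraph (Quotient π) s where
  verts := Quotient.mk π '' Γ.verts
  finite := Γ.finite.image _
  nonem := Γ.nonem.image _
  E := fun r A B => ∃ a b, Γ.E r a b ∧ Quotient.mk π a = A ∧ Quotient.mk π b = B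
  memL := fun r A B h => by
    obtain ⟨a, b, he, ha, hb⟩ := h
    exact ⟨a, Γ.memL r a b he, ha⟩
  memR := fun r A B h => by
    obtain ⟨a, b, he, ha, hb⟩ := h
    exact ⟨b, Γ.memR r a b he, hb⟩

/-- `π` is a congruence of `Γ`: for any two edges of the same color, the source
blocks agree iff the target blocks agree. -/
def IsCongruence (Γ : CGraph V s) (π : Setoid V) : Prop :=
  ∀ r a₁ b₁ a₂ b₂, Γ.E r a₁ b₁ → Γ.E r a₂ b₂ → (π.r a₁ a₂ ↔ π.r b₁ b₂)

/-- `π` is a strong congruence of `Γ`: a congruence whose quotient is strongly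
admissible. -/
def IsStrongCongruence (d : Fin s → ℕ∞) (Γ : CGraph V s) (π : Setoid V) : Prop :=
  Γ.IsCongruence π ∧ (Γ.quot π).StronglyAdmissible d

/-- Isomorphism of edge-colored graphs: a bijection between the vertex sets
preserving the `r`-edges in both directions, for every color `r`. -/
def Iso (Γ₁ : CGraph V s) (Γ₂ : CGraph W s) : Prop :=
  ∃ Φ : V → W, Set.BijOn Φ Γ₁.verts Γ₂.verts ∧
    ∀ r a b, a ∈ Γ₁.verts → b ∈ Γ₁.verts → (Γ₂.E r (Φ a) (Φ b) ↔ Γ₁.E r a b)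

end CGraph

/-- The next vertex (cyclically) in `Fin n`. -/
def nxt {n : ℕ} (k : Fin n) : Fin n := ⟨(k.1 + 1) % n, Nat.mod_lt _ k.pos⟩

/-- The word-graph of a non-empty word `w` in the letters `g_r` (encoded `(r, true)`)
and `g_r^*` (encoded `(r, false)`): vertex set `{1,…,n}` (as `Fin w.length`), and for
each position `k` one edge of color `r_k`, going `k ← k+1` for `g_r` and `k → k+1`
for `g_r^*` (cyclically). -/
def wordGraph {s : ℕ} (w : List (Fin s × Bool)) (hw : w ≠ []) :
    CGraph (Fin w.length) s where
  verts := Set.univ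
  finite := Set.finite_univ
  nonem := ⟨⟨0, List.length_pos_iff.mpr hw⟩, Set.mem_univ _⟩
  E := fun r a b => ∃ k : Fin w.length,
    (w.get k = (r, true) ∧ a = nxt k ∧ b = k) ∨
    (w.get k = (r, false) ∧ a = k ∧ b = nxt k)
  memL := fun _ _ _ _ => Set.mem_univ _
  memR := fun _ _ _ _ => Set.mem_univ _

/-- `x` is one of the words `g_r g_r^*`, `g_r^* g_r` (any `r`), or `g_r^{d_r}`,
`(g_r^*)^{d_r}` (any `r` with `d r < ∞`). -/
def IsSpecialWord (s : ℕ) (d : Fin s → ℕ∞) (x : List (Fin s × Bool)) : Prop :=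
  ∃ r : Fin s,
    x = [(r, true), (r, false)] ∨ x = [(r, false), (r, true)] ∨
      ∃ m : ℕ, d r = (m : ℕ∞) ∧
        (x = List.replicate m (r, true) ∨ x = List.replicate m (r, false))

/-- The number of strong congruences `π` of `Γ` with `χ(Γ/π) = 1`. -/
def sconCount {s : ℕ} (d : Fin s → ℕ∞) {V : Type} (Γ : CGraph V s) : ℕ :=
  Nat.card {π : Setoid V // Γ.IsStrongCongruence d π ∧ (Γ.quot π).chi = 1}

/-!
If two cyclically adjacent letters of `w` are `g_r g_r^*` or `g_r^* g_r`, they form the required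
factor. Otherwise adjacent letters of equal colour are equal, so the maximal run of equal letters
`g_r^ε` through an edge of the `r`-path `P` is bordered by letters of other colours: both its end
vertices lie on `P` and on other paths, hence coincide by hypothesis (if `w` is a power of one
letter, the whole word is the run). Reading the run is then a closed walk in `P`; in an admissible
graph such a walk cannot be left, so it exhausts `P`. Thus `P` is an `r`-loop with at most as many
edges as the run has letters, strong admissibility gives it exactly `d_r` edges, and
`(g_r^ε)^{d_r}` is a cyclic factor of `w`.
-/

namespace CGraph

variable {V : Type} {s : ℕ} {Γ P C : CGraph V s} {r : Fin s} {a b : V}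

instance (Γ : CGraph V s) : Std.Symm Γ.Adj := ⟨fun _ _ ⟨r, h⟩ => ⟨r, h.symm⟩⟩

lemma Subgraph.adj (h : C.Subgraph Γ) : C.Adj a b → Γ.Adj a b :=
  fun ⟨r, hE⟩ => ⟨r, hE.imp (h.2 _ _ _) (h.2 _ _ _)⟩

def component (Γ : CGraph V s) (a : V) (ha : a ∈ Γ.verts) : CGraph V s where
  verts := {b | b ∈ Γ.verts ∧ Relation.ReflTransGen Γ.Adj a b}
  finite := Γ.finite.subset fun _ hb => hb.1
  nonem := ⟨a, ha, .refl⟩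
  E r b c := Γ.E r b c ∧ (Relation.ReflTransGen Γ.Adj a b ∨ Relation.ReflTransGen Γ.Adj a c)
  memL r b c h := ⟨Γ.memL r b c h.1, h.2.elim id fun h' => h'.tail ⟨r, .inr h.1⟩⟩
  memR r b c h := ⟨Γ.memR r b c h.1, h.2.elim (fun h' => h'.tail ⟨r, .inl h.1⟩) id⟩

lemma reflTransGen_component_adj {ha : a ∈ Γ.verts} (h : Relation.ReflTransGen Γ.Adj a b) :
    Relation.ReflTransGen (Γ.component a ha).Adj a b := by
  induction h with
  | refl => exact .refl
  | tail hab hbc ih =>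
    obtain ⟨r, hE | hE⟩ := hbc
    · exact ih.tail ⟨r, .inl ⟨hE, .inl hab⟩⟩
    · exact ih.tail ⟨r, .inr ⟨hE, .inr hab⟩⟩

lemma Connected.subgraph_component (hC : C.Connected) (hsub : C.Subgraph Γ) (ha : a ∈ C.verts) :
    C.Subgraph (Γ.component a (hsub.1 ha)) := by
  have hreach : ∀ b ∈ C.verts, Relation.ReflTransGen Γ.Adj a b := fun b hb =>
    Relation.ReflTransGen.mono (fun _ _ => hsub.adj) _ _ (hC a ha b hb)
  exact ⟨fun b hb => ⟨hsub.1 hb, hreach b hb⟩,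
    fun r b c h => ⟨hsub.2 r b c h, .inl (hreach b (C.memL r b c h))⟩⟩

lemma component_isComponent (Γ : CGraph V s) (a : V) (ha : a ∈ Γ.verts) :
    (Γ.component a ha).IsComponent Γ := by
  have hsub : (Γ.component a ha).Subgraph Γ := ⟨fun _ hb => hb.1, fun _ _ _ h => h.1⟩
  have hconn : (Γ.component a ha).Connected := by
    intro b hb c hc
    exact (Std.Symm.symm _ _ (reflTransGen_component_adj hb.2)).trans
      (reflTransGen_component_adj hc.2)
  refine ⟨hsub, hconn, fun C' hC'sub hC' hle => ?_⟩
  exact hC'.subgraph_component hC'sub (hle.1 ⟨ha, .refl⟩)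

lemma IsComponent.E_of_E (hC : C.IsComponent Γ) (hE : Γ.E r a b)
    (hab : a ∈ C.verts ∨ b ∈ C.verts) : C.E r a b := by
  have key : ∀ c (hc : c ∈ C.verts), c = a ∨ c = b → C.E r a b := by
    intro c hc hcab
    have hsub := hC.2.1.subgraph_component hC.1 hc
    have hcomp := component_isComponent Γ c (hC.1.1 hc)
    refine (hC.2.2 _ hcomp.1 hcomp.2.1 hsub).2 r a b ⟨hE, ?_⟩
    rcases hcab with rfl | rfl
    exacts [.inl .refl, .inr .refl]
  rcases hab with h | h
  exacts [key a h (.inl rfl), key b h (.inr rfl)]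

lemma IsRPath.eq_and_E (hP : P.IsRPath Γ r) {r' : Fin s} (h : P.E r' a b) :
    r' = r ∧ Γ.E r a b := by
  obtain ⟨rfl, hE⟩ := hP.1.1.2 r' a b h
  exact ⟨rfl, hE⟩

lemma IsRPath.E_of_E (hP : P.IsRPath Γ r) (hE : Γ.E r a b)
    (hab : a ∈ P.verts ∨ b ∈ P.verts) : P.E r a b :=
  hP.1.E_of_E (show (Γ.mono r).E r a b from ⟨rfl, hE⟩) hab

lemma exists_isRPath_of_E (hE : Γ.E r a b) :
    ∃ C : CGraph V s, C.IsRPath Γ r ∧ a ∈ C.verts ∧ b ∈ C.verts := by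
  have ha : a ∈ (Γ.mono r).verts := Γ.memL r a b hE
  have hCE : ((Γ.mono r).component a ha).E r a b := ⟨⟨rfl, hE⟩, .inl .refl⟩
  exact ⟨_, ⟨component_isComponent _ a ha, fun h => h r a b hCE⟩,
    ((Γ.mono r).component a ha).memL r a b hCE, ((Γ.mono r).component a ha).memR r a b hCE⟩

lemma IsRPath.exists_ne_of_E (hP : P.IsRPath Γ r) {r' : Fin s} (hE : Γ.E r' a b) (hr : r' ≠ r) :
    ∃ C : CGraph V s, C.IsPathOf Γ ∧ C ≠ P ∧ a ∈ C.verts ∧ b ∈ C.verts := by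
  obtain ⟨C, hC, ha, hb⟩ := exists_isRPath_of_E hE
  refine ⟨C, ⟨r', hC⟩, ?_, ha, hb⟩
  rintro rfl
  exact hr (hP.eq_and_E (hC.E_of_E hE (.inl ha))).1

def IsSharedVertex (Γ P : CGraph V s) (a : V) : Prop :=
  a ∈ P.verts ∧ ∃ Q : CGraph V s, Q.IsPathOf Γ ∧ Q ≠ P ∧ a ∈ Q.verts

/-- The edge crossed when the letter `x` is read from `a` to `b`: as in `wordGraph`, `(r, true)`
(that is `g_r`) crosses an `r`-edge backwards and `(r, false)` (that is `g_r^*`) forwards. -/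
def LetterEdge (Γ : CGraph V s) (x : Fin s × Bool) (a b : V) : Prop :=
  bif x.2 then Γ.E x.1 b a else Γ.E x.1 a b

lemma LetterEdge.mem {x : Fin s × Bool} (h : P.LetterEdge x a b) :
    a ∈ P.verts ∧ b ∈ P.verts := by
  obtain ⟨r, _ | _⟩ := x
  exacts [⟨P.memL _ _ _ h, P.memR _ _ _ h⟩, ⟨P.memR _ _ _ h, P.memL _ _ _ h⟩]

lemma IsRPath.letterEdge_of_letterEdge (hP : P.IsRPath Γ r) {x : Fin s × Bool} (hx : x.1 = r)
    (h : Γ.LetterEdge x a b) (hab : a ∈ P.verts ∨ b ∈ P.verts) : P.LetterEdge x a b := by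
  obtain ⟨r, _ | _⟩ := x
  all_goals obtain rfl := hx
  exacts [hP.E_of_E h hab, hP.E_of_E h hab.symm]

lemma IsRPath.exists_ne_of_letterEdge (hP : P.IsRPath Γ r) {x : Fin s × Bool} (hx : x.1 ≠ r)
    (h : Γ.LetterEdge x a b) :
    ∃ C : CGraph V s, C.IsPathOf Γ ∧ C ≠ P ∧ a ∈ C.verts ∧ b ∈ C.verts := by
  obtain ⟨r', _ | _⟩ := x
  · exact hP.exists_ne_of_E h hx
  · obtain ⟨C, hC, hCP, hb, ha⟩ := hP.exists_ne_of_E h hx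
    exact ⟨C, hC, hCP, ha, hb⟩

lemma IsRPath.exists_eq_of_cycle (hΓ : Γ.Admissible) (hP : P.IsRPath Γ r)
    {f : ℕ → V} {ℓ : ℕ} (hℓ : 0 < ℓ) (hcyc : f ℓ = f 0)
    (hwalk : ∀ j < ℓ, P.E r (f j) (f (j + 1))) : ∀ b ∈ P.verts, ∃ i < ℓ, f i = b := by
  have hΓwalk : ∀ j < ℓ, Γ.E r (f j) (f (j + 1)) := fun j hj => (hP.eq_and_E (hwalk j hj)).2
  intro b hb
  have hreach := hP.1.2.1 _ (P.memL _ _ _ (hwalk 0 hℓ)) b hb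
  clear hb
  induction hreach with
  | refl => exact ⟨0, hℓ, rfl⟩
  | tail _ hbc ih =>
    obtain ⟨i, hi, rfl⟩ := ih
    obtain ⟨r', hE | hE⟩ := hbc
    · obtain ⟨hr, hΓE⟩ := hP.eq_and_E hE
      subst r'
      rw [hΓ.1 r _ _ _ hΓE (hΓwalk i hi)]
      rcases Nat.lt_or_ge (i + 1) ℓ with h | h
      · exact ⟨i + 1, h, rfl⟩
      · exact ⟨0, hℓ, by rw [show i + 1 = ℓ by omega, hcyc]⟩
    · obtain ⟨hr, hΓE⟩ := hP.eq_and_E hE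
      subst r'
      rcases Nat.eq_zero_or_pos i with rfl | h
      · rw [← hcyc, show ℓ = ℓ - 1 + 1 by omega] at hΓE
        exact ⟨ℓ - 1, by omega, hΓ.2 r _ _ _ (hΓwalk _ (by omega)) hΓE⟩
      · rw [show i = i - 1 + 1 by omega] at hΓE
        exact ⟨i - 1, by omega, hΓ.2 r _ _ _ (hΓwalk _ (by omega)) hΓE⟩

lemma IsRPath.closed_and_edgeCount_le_of_cycle (hΓ : Γ.Admissible) (hP : P.IsRPath Γ r)
    {f : ℕ → V} {ℓ : ℕ} (hℓ : 0 < ℓ) (hcyc : f ℓ = f 0)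
    (hwalk : ∀ j < ℓ, P.E r (f j) (f (j + 1))) : P.Closed ∧ P.edgeCount ≤ ℓ := by
  have hverts := hP.exists_eq_of_cycle hΓ hℓ hcyc hwalk
  refine ⟨fun b hb => ?_, ?_⟩
  · obtain ⟨i, hi, rfl⟩ := hverts b hb
    exact ⟨r, _, hwalk i hi⟩
  · calc P.edgeCount ≤ Nat.card (Fin ℓ) :=
          Nat.card_le_card_of_surjective (fun j => ⟨(r, f j, f (j + 1)), hwalk j j.2⟩) ?_
      _ = ℓ := Nat.card_fin ℓ
    rintro ⟨⟨r', a, b⟩, hE : P.E r' a b⟩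
    obtain ⟨hr, hΓE⟩ := hP.eq_and_E hE
    subst r'
    obtain ⟨i, hi, rfl⟩ := hverts a (P.memL _ _ _ hE)
    obtain rfl : b = f (i + 1) := hΓ.1 r _ _ _ hΓE (hP.eq_and_E (hwalk i hi)).2
    exact ⟨⟨i, hi⟩, rfl⟩

lemma IsRPath.closed_and_edgeCount_le (hΓ : Γ.Admissible) (hP : P.IsRPath Γ r)
    {x : Fin s × Bool} {f : ℕ → V} {ℓ : ℕ} (hℓ : 0 < ℓ) (hcyc : f ℓ = f 0)
    (hwalk : ∀ j < ℓ, P.LetterEdge x (f j) (f (j + 1))) : P.Closed ∧ P.edgeCount ≤ ℓ := by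
  obtain ⟨r', ε⟩ := x
  obtain rfl : r' = r := by cases ε <;> exact (hP.eq_and_E (hwalk 0 hℓ)).1
  cases ε
  · exact hP.closed_and_edgeCount_le_of_cycle hΓ hℓ hcyc hwalk
  · refine hP.closed_and_edgeCount_le_of_cycle hΓ (f := fun j => f (ℓ - j)) hℓ
      (by simp [hcyc]) fun j hj => ?_
    have h := hwalk (ℓ - (j + 1)) (by omega)
    rwa [show ℓ - (j + 1) + 1 = ℓ - j by omega] at h

end CGraph

def letterAt {α : Type} (w : List α) [NeZero w.length] (i : ℕ) : α := w.get (Fin.ofNat _ i)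

lemma letterAt_periodic {α : Type} (w : List α) [NeZero w.length] :
    Function.Periodic (letterAt w) w.length := fun i => by
  simp [letterAt]

lemma exists_rotate_eq_append {α : Type} (w : List α) [NeZero w.length] (p : ℕ) (x : List α)
    (hx : x.length ≤ w.length) (hlet : ∀ j (hj : j < x.length), letterAt w (p + j) = x[j]) :
    ∃ w₁ w₂ v : List α, w = w₁ ++ w₂ ∧ w₂ ++ w₁ = v ++ x := by
  set n := w.length with hn
  set t := (p + x.length) % n
  have htn : t ≤ n := (Nat.mod_lt _ (NeZero.pos n)).le
  refine ⟨w.take t, w.drop t, (w.rotate t).take (n - x.length),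
    (w.take_append_drop t).symm, ?_⟩
  rw [← List.rotate_eq_drop_append_take htn]
  suffices hdrop : (w.rotate t).drop (n - x.length) = x by
    conv_lhs => rw [← List.take_append_drop (n - x.length) (w.rotate t), hdrop]
  apply List.ext_getElem
  · simp only [List.length_drop, List.length_rotate, ← hn]
    omega
  · intro j hj _
    have hjx : j < x.length := by simp only [List.length_drop, List.length_rotate] at hj; omega
    rw [List.getElem_drop, List.getElem_rotate, ← hlet j hjx]
    simp only [letterAt, List.get_eq_getElem, Fin.val_ofNat, ← hn]
    congr 1
    rw [Nat.add_mod_mod, show n - x.length + j + (p + x.length) = p + j + n by omega,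
      Nat.add_mod_right]

/-- The run is sought around the copy `k + n` of `k`, so that the letter `L p` before it exists. -/
lemma Function.Periodic.exists_maximal_run {α : Type} {L : ℕ → α} {n : ℕ}
    (hL : Periodic L n) (hn : 0 < n) (k : ℕ) {i : ℕ} (hi : L i ≠ L k) :
    ∃ p ℓ, p < k + n ∧ k + n ≤ p + ℓ ∧ ℓ < n ∧
      L p ≠ L k ∧ L (p + ℓ + 1) ≠ L k ∧ ∀ j < ℓ, L (p + 1 + j) = L k := by
  classical
  set K := k + n
  have hiK : L (i % n) ≠ L k := by rwa [hL.map_mod_nat]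
  have hmod : i % n < n := Nat.mod_lt _ hn
  have hback : ∃ t, t ≤ K ∧ L (K - t) ≠ L k :=
    ⟨K - i % n, by omega, by rwa [show K - (K - i % n) = i % n by omega]⟩
  have hfwd : ∃ t, L (K + t) ≠ L k := by
    have hKn : K ≤ K * n := Nat.le_mul_of_pos_right K hn
    have hper : L (i % n + K * n) = L (i % n) := by simpa using hL.nat_mul K (i % n)
    refine ⟨i % n + K * n - K, ?_⟩
    rwa [show K + (i % n + K * n - K) = i % n + K * n by omega, hper]
  obtain ⟨htbK, htb⟩ := Nat.find_spec hback
  have htb_min := fun t => Nat.find_min (m := t) hback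
  have htf := Nat.find_spec hfwd
  have htf_min := fun t => Nat.find_min (m := t) hfwd
  set tb := Nat.find hback
  set tf := Nat.find hfwd
  have hLK : L K = L k := hL k
  have hleft : ∀ t < tb, L (K - t) = L k := fun t ht => by
    by_contra h; exact htb_min t ht ⟨by omega, h⟩
  have hright : ∀ t < tf, L (K + t) = L k := fun t ht => not_not.mp (htf_min t ht)
  have htb0 : 0 < tb := Nat.pos_of_ne_zero fun h => htb (by rw [h]; exact hLK)
  have htf0 : 0 < tf := Nat.pos_of_ne_zero fun h => htf (by rw [h]; exact hLK)
  have hrun : ∀ j < tb + tf - 1, L (K - tb + 1 + j) = L k := by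
    intro j hj
    rcases Nat.lt_or_ge j tb with h | h
    · rw [show K - tb + 1 + j = K - (tb - 1 - j) by omega]; exact hleft _ (by omega)
    · rw [show K - tb + 1 + j = K + (j + 1 - tb) by omega]; exact hright _ (by omega)
  have hend : L (K - tb + (tb + tf - 1) + 1) ≠ L k := by
    rwa [show K - tb + (tb + tf - 1) + 1 = K + tf by omega]
  refine ⟨K - tb, tb + tf - 1, by omega, by omega, ?_, htb, hend, hrun⟩
  by_contra! hlen
  apply hend
  rw [show K - tb + (tb + tf - 1) + 1 = K - tb + 1 + (tb + tf - 1 - n) + n by omega, hL]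
  exact hrun _ (by omega)

section WordGraph

variable {s : ℕ} {w : List (Fin s × Bool)} [NeZero w.length]

lemma exists_rotate_special_of_alternation (d : Fin s → ℕ∞) {i : ℕ}
    (hcol : (letterAt w i).1 = (letterAt w (i + 1)).1)
    (halt : (letterAt w i).2 ≠ (letterAt w (i + 1)).2) :
    ∃ w₁ w₂ v x : List (Fin s × Bool),
      w = w₁ ++ w₂ ∧ w₂ ++ w₁ = v ++ x ∧ IsSpecialWord s d x := by
  have hlen : 2 ≤ w.length := by
    by_contra! h
    have h1 : Fin.ofNat w.length i = Fin.ofNat w.length (i + 1) :=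
      Fin.ext (by simp [show w.length = 1 by have := NeZero.pos w.length; omega])
    exact halt (by rw [letterAt, letterAt, h1])
  obtain ⟨w₁, w₂, v, h₁, h₂⟩ :=
    exists_rotate_eq_append w i [letterAt w i, letterAt w (i + 1)] hlen (by
      intro j hj
      simp only [List.length_cons, List.length_nil] at hj
      interval_cases j <;> rfl)
  refine ⟨w₁, w₂, v, _, h₁, h₂, ?_⟩
  generalize letterAt w i = x, letterAt w (i + 1) = y at hcol halt
  obtain ⟨r, _ | _⟩ := x <;> obtain ⟨r', _ | _⟩ := y <;> obtain rfl : r = r' := hcol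
  all_goals first | exact absurd rfl halt | exact ⟨r, by simp⟩

def vertexAt (π : Setoid (Fin w.length)) (i : ℕ) : Quotient π := Quotient.mk π (Fin.ofNat _ i)

lemma quot_wordGraph_letterEdge (hw : w ≠ []) (π : Setoid (Fin w.length)) (i : ℕ) :
    ((wordGraph w hw).quot π).LetterEdge (letterAt w i) (vertexAt π i) (vertexAt π (i + 1)) := by
  have hnxt : nxt (Fin.ofNat w.length i) = Fin.ofNat w.length (i + 1) := by
    ext; simp [nxt]
  rcases hx : letterAt w i with ⟨r, _ | _⟩
  · exact ⟨_, _, ⟨_, .inr ⟨hx, rfl, hnxt.symm⟩⟩, rfl, rfl⟩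
  · exact ⟨_, _, ⟨_, .inl ⟨hx, hnxt.symm, rfl⟩⟩, rfl, rfl⟩

variable {π : Setoid (Fin w.length)}

lemma vertexAt_add_length (i : ℕ) : vertexAt π (i + w.length) = vertexAt π i :=
  congrArg (Quotient.mk π) (Fin.ext (by simp))

namespace CGraph

variable {hw : w ≠ []} {P : CGraph (Quotient π) s} {r : Fin s}

lemma IsRPath.exists_letterAt (hP : P.IsRPath ((wordGraph w hw).quot π) r) :
    ∃ k, (letterAt w k).1 = r ∧ vertexAt π k ∈ P.verts := by
  obtain ⟨r', A, B, hAB⟩ : ∃ r' A B, P.E r' A B := by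
    by_contra! h
    exact hP.2 h
  obtain ⟨rfl, a, b, ⟨k, hk⟩, rfl, rfl⟩ := hP.eq_and_E hAB
  refine ⟨k, ?_⟩
  simp only [letterAt, vertexAt, Fin.ofNat_val_eq_self]
  rcases hk with ⟨hk, -, rfl⟩ | ⟨hk, rfl, -⟩
  exacts [⟨by rw [hk], P.memR _ _ _ hAB⟩, ⟨by rw [hk], P.memL _ _ _ hAB⟩]

lemma IsRPath.letterEdge_of_mem (hP : P.IsRPath ((wordGraph w hw).quot π) r) {i : ℕ}
    (hi : (letterAt w i).1 = r)
    (hmem : vertexAt π i ∈ P.verts ∨ vertexAt π (i + 1) ∈ P.verts) :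
    P.LetterEdge (letterAt w i) (vertexAt π i) (vertexAt π (i + 1)) :=
  hP.letterEdge_of_letterEdge hi (quot_wordGraph_letterEdge hw π i) hmem

lemma IsRPath.mem_iff_of_run (hP : P.IsRPath ((wordGraph w hw).quot π) r) {q ℓ : ℕ}
    (hrun : ∀ j < ℓ, (letterAt w (q + j)).1 = r) :
    ∀ j ≤ ℓ, (vertexAt π (q + j) ∈ P.verts ↔ vertexAt π q ∈ P.verts) := by
  intro j hj
  induction j with
  | zero => rfl
  | succ j ih =>
    rw [← ih (by omega)]
    have hedge := hP.letterEdge_of_mem (i := q + j) (hrun j (by omega))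
    exact ⟨fun h => (hedge (.inr h)).mem.1, fun h => (hedge (.inl h)).mem.2⟩

lemma IsRPath.isSharedVertex (hP : P.IsRPath ((wordGraph w hw).quot π) r) {i c : ℕ}
    (hi : (letterAt w i).1 ≠ r) (hc : c = i ∨ c = i + 1) (hmem : vertexAt π c ∈ P.verts) :
    ((wordGraph w hw).quot π).IsSharedVertex P (vertexAt π c) := by
  obtain ⟨C, hC, hCP, hiC, hi1C⟩ :=
    hP.exists_ne_of_letterEdge hi (quot_wordGraph_letterEdge hw π i)
  refine ⟨hmem, C, hC, hCP, ?_⟩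
  rcases hc with rfl | rfl
  exacts [hiC, hi1C]

lemma IsRPath.exists_closed_run (hP : P.IsRPath ((wordGraph w hw).quot π) r)
    (hone : ∀ a b, ((wordGraph w hw).quot π).IsSharedVertex P a →
      ((wordGraph w hw).quot π).IsSharedVertex P b → a = b)
    (hnoalt : ∀ i, (letterAt w i).1 = (letterAt w (i + 1)).1 →
      letterAt w i = letterAt w (i + 1)) :
    ∃ q ℓ, 0 < ℓ ∧ ℓ ≤ w.length ∧ (letterAt w q).1 = r ∧
      (∀ j < ℓ, letterAt w (q + j) = letterAt w q) ∧
      vertexAt π q ∈ P.verts ∧ vertexAt π (q + ℓ) = vertexAt π q := by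
  obtain ⟨k, hkr, hk⟩ := hP.exists_letterAt
  by_cases hconst : ∀ i, letterAt w i = letterAt w k
  · exact ⟨k, w.length, NeZero.pos _, le_rfl, hkr, fun j _ => (hconst _).trans (hconst k).symm,
      hk, vertexAt_add_length k⟩
  push Not at hconst
  obtain ⟨i, hi⟩ := hconst
  obtain ⟨p, ℓ, hpK, hKp, hℓn, hp, hpℓ, hrun⟩ :=
    (letterAt_periodic w).exists_maximal_run (NeZero.pos _) k hi
  have hℓ : 0 < ℓ := by omega
  have hfirst : letterAt w (p + 1) = letterAt w k := hrun 0 hℓ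
  have hlast : letterAt w (p + ℓ) = letterAt w k := by
    rw [show p + ℓ = p + 1 + (ℓ - 1) by omega]; exact hrun _ (by omega)
  have hcol : ∀ j < ℓ, (letterAt w (p + 1 + j)).1 = r := fun j hj => by rw [hrun j hj, hkr]
  have hmem := hP.mem_iff_of_run hcol
  have hq : vertexAt π (p + 1) ∈ P.verts := by
    have h := hmem (k + w.length - (p + 1)) (by omega)
    rw [show p + 1 + (k + w.length - (p + 1)) = k + w.length by omega, vertexAt_add_length] at h
    exact h.1 hk
  have hqℓ : vertexAt π (p + 1 + ℓ) ∈ P.verts := (hmem ℓ le_rfl).2 hq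
  have hleft : (letterAt w p).1 ≠ r := fun h =>
    hp ((hnoalt p (by rw [h, hfirst, hkr])).trans hfirst)
  have hright : (letterAt w (p + ℓ + 1)).1 ≠ r := fun h =>
    hpℓ ((hnoalt (p + ℓ) (by rw [h, hlast, hkr])).symm.trans hlast)
  refine ⟨p + 1, ℓ, hℓ, by omega, by rw [hfirst, hkr],
    fun j hj => (hrun j hj).trans hfirst.symm, hq, hone _ _ ?_ ?_⟩
  · exact hP.isSharedVertex hright (.inl (by omega)) hqℓ
  · exact hP.isSharedVertex hleft (.inr rfl) hq

lemma IsRPath.closed_and_edgeCount_le_of_run (hΓ : ((wordGraph w hw).quot π).Admissible)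
    (hP : P.IsRPath ((wordGraph w hw).quot π) r) {q ℓ : ℕ} (hℓ : 0 < ℓ)
    (hqr : (letterAt w q).1 = r) (hrun : ∀ j < ℓ, letterAt w (q + j) = letterAt w q)
    (hq : vertexAt π q ∈ P.verts) (hcyc : vertexAt π (q + ℓ) = vertexAt π q) :
    P.Closed ∧ P.edgeCount ≤ ℓ := by
  have hmem := hP.mem_iff_of_run (fun j hj => (hrun j hj ▸ hqr : (letterAt w (q + j)).1 = r))
  refine hP.closed_and_edgeCount_le hΓ (x := letterAt w q) (f := fun j => vertexAt π (q + j)) hℓ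
    hcyc fun j hj => ?_
  rw [← hrun j hj]
  exact hP.letterEdge_of_mem (hrun j hj ▸ hqr) (.inl ((hmem j hj.le).2 hq))

end CGraph

end WordGraph

theorem cyclic_decomposition_of_path_with_one_shared_vertex_general (s : ℕ)
    (d : Fin s → ℕ∞)
    (w : List (Fin s × Bool)) (hw : w ≠ [])
    (π : Setoid (Fin w.length))
    (hπ : (wordGraph w hw).IsStrongCongruence d π)
    (P : CGraph (Quotient π) s)
    (hP : P.IsPathOf ((wordGraph w hw).quot π))
    (hone : ∀ a b : Quotient π,
      (a ∈ P.verts ∧ ∃ Q : CGraph (Quotient π) s,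
        Q.IsPathOf ((wordGraph w hw).quot π) ∧ Q ≠ P ∧ a ∈ Q.verts) →
      (b ∈ P.verts ∧ ∃ Q : CGraph (Quotient π) s,
        Q.IsPathOf ((wordGraph w hw).quot π) ∧ Q ≠ P ∧ b ∈ Q.verts) →
      a = b) :
    ∃ w₁ w₂ v x : List (Fin s × Bool),
      w = w₁ ++ w₂ ∧ w₂ ++ w₁ = v ++ x ∧ IsSpecialWord s d x := by
  have : NeZero w.length := ⟨by simpa using hw⟩
  by_cases halt : ∃ i, (letterAt w i).1 = (letterAt w (i + 1)).1 ∧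
      (letterAt w i).2 ≠ (letterAt w (i + 1)).2
  · obtain ⟨i, hcol, hε⟩ := halt
    exact exists_rotate_special_of_alternation d hcol hε
  push Not at halt
  obtain ⟨r, hPr⟩ := hP
  obtain ⟨q, ℓ, hℓ, hℓn, hqr, hrun, hq, hcyc⟩ :=
    hPr.exists_closed_run hone fun i h => Prod.ext h (halt i h)
  obtain ⟨hclosed, hcount⟩ := hPr.closed_and_edgeCount_le_of_run hπ.2.1 hℓ hqr hrun hq hcyc
  have hd : (P.edgeCount : ℕ∞) = d r := (hπ.2.2 r P hPr).1 hclosed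
  obtain ⟨w₁, w₂, v, h₁, h₂⟩ := exists_rotate_eq_append w q
    (List.replicate P.edgeCount (letterAt w q)) (by rw [List.length_replicate]; omega)
    (fun j hj => by simpa using hrun j (by rw [List.length_replicate] at hj; omega))
  refine ⟨w₁, w₂, v, _, h₁, h₂, r, .inr (.inr ⟨P.edgeCount, hd.symm, ?_⟩)⟩
  rcases hx : letterAt w q with ⟨r', _ | _⟩ <;> rw [hx] at hqr <;> subst hqr <;> simp

/-- Let `w ≠ e` and let `π` be a strong congruence of `Γ_w`. If `Γ_w/π` has a path
`P` such that at most one vertex of `P` belongs to other paths of `Γ_w/π`, then some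
cyclic permutation of the symbols of `w` is of the form `v x` with `x` one of the
words `g_r g_r^*`, `g_r^* g_r`, `g_r^{d_r}`, `(g_r^*)^{d_r}`. -/
theorem cyclic_decomposition_of_path_with_one_shared_vertex (s : ℕ) (hs : 0 < s)
    (d : Fin s → ℕ∞) (hd : ∀ r, 1 ≤ d r)
    (w : List (Fin s × Bool)) (hw : w ≠ [])
    (π : Setoid (Fin w.length))
    (hπ : (wordGraph w hw).IsStrongCongruence d π)
    (P : CGraph (Quotient π) s)
    (hP : P.IsPathOf ((wordGraph w hw).quot π))
    (hone : ∀ a b : Quotient π,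
      (a ∈ P.verts ∧ ∃ Q : CGraph (Quotient π) s,
        Q.IsPathOf ((wordGraph w hw).quot π) ∧ Q ≠ P ∧ a ∈ Q.verts) →
      (b ∈ P.verts ∧ ∃ Q : CGraph (Quotient π) s,
        Q.IsPathOf ((wordGraph w hw).quot π) ∧ Q ≠ P ∧ b ∈ Q.verts) →
      a = b) :
    ∃ w₁ w₂ v x : List (Fin s × Bool),
      w = w₁ ++ w₂ ∧ w₂ ++ w₁ = v ++ x ∧ IsSpecialWord s d x :=
  cyclic_decomposition_of_path_with_one_shared_vertex_general s d w hw π hπ P hP hone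
end
end

section
/- If A is a non-empty set of positive integers and D = gcd(A), then a_N^(A) > 0 for every sufficiently large multiple N of D; that is, there exists N_0 such that every multiple N of D with N ≥ N_0 satisfies S_N^(A) ≠ ∅. -/
noncomputable section

open Filter Topology

/-- `permSet A N` is `S_N^(A)`: the set of permutations of `{1,…,N}` (modeled as
`Fin N`) all of whose cycles have length belonging to `A`; the length of the cycle
of `σ` containing `i` is the minimal period of `i` under `σ`. -/
def permSet (A : Set ℕ) (N : ℕ) : Set (Equiv.Perm (Fin N)) :=
  {σ | ∀ i : Fin N, Function.minimalPeriod (⇑σ) i ∈ A}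

/-- `pN A k N` is `p_N^(A)(k)`: the probability that, in a uniformly random
permutation from `S_N^(A)`, the first element belongs to a cycle of length `k`. -/
def pN (A : Set ℕ) (k N : ℕ) : ℝ :=
  (Nat.card {σ : Equiv.Perm (Fin N) // σ ∈ permSet A N ∧
      ∃ i : Fin N, (i : ℕ) = 0 ∧ Function.minimalPeriod (⇑σ) i = k} : ℝ) /
    (Nat.card ↥(permSet A N) : ℝ)

/-! Every `N` in the additive monoid generated by `A` carries a permutation with all cycle
lengths in `A`: a single `a`-cycle realises `a ∈ A`, and a disjoint union realises a sum.
Every large multiple of `gcd A` lies in that monoid (the solution of the Frobenius problem). -/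

namespace Function

theorem Semiconj.minimalPeriod_apply_eq {α β : Type*} {fa : α → α} {fb : β → β} {g : α → β}
    (h : Semiconj g fa fb) (hg : Injective g) (x : α) :
    minimalPeriod fb (g x) = minimalPeriod fa x := by
  refine minimalPeriod_eq_minimalPeriod_iff.mpr fun n => ?_
  rw [IsPeriodicPt, IsPeriodicPt, IsFixedPt, IsFixedPt, ← (h.iterate_right n).eq, hg.eq_iff]

end Function

open Function

namespace Equiv.Perm

variable {α β : Type*}

theorem minimalPeriod_permCongr_apply (e : α ≃ β) (σ : Perm α) (x : α) :
    minimalPeriod (e.permCongr σ) (e x) = minimalPeriod σ x :=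
  Semiconj.minimalPeriod_apply_eq (fun y => by simp) e.injective x

theorem minimalPeriod_sumCongr_inl (σ : Perm α) (τ : Perm β) (x : α) :
    minimalPeriod (σ.sumCongr τ) (Sum.inl x) = minimalPeriod σ x :=
  Semiconj.minimalPeriod_apply_eq (g := Sum.inl) (fun _ => rfl) Sum.inl_injective x

theorem minimalPeriod_sumCongr_inr (σ : Perm α) (τ : Perm β) (x : β) :
    minimalPeriod (σ.sumCongr τ) (Sum.inr x) = minimalPeriod τ x :=
  Semiconj.minimalPeriod_apply_eq (g := Sum.inr) (fun _ => rfl) Sum.inr_injective x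

end Equiv.Perm

theorem minimalPeriod_finRotate (n : ℕ) (i : Fin n) : minimalPeriod (finRotate n) i = n := by
  cases n with
  | zero => exact i.elim0
  | succ n =>
    have hrot : ⇑(finRotate (n + 1)) = (1 + ·) :=
      funext fun j => (finRotate_apply j).trans (add_comm _ _)
    have hsemi : Semiconj (· + i) (1 + ·) (1 + ·) := fun x => add_assoc 1 x i
    have hperiod := hsemi.minimalPeriod_apply_eq (add_left_injective i) 0
    rw [zero_add] at hperiod
    rw [hrot, hperiod]
    -- `ZMod (n + 1)` is `Fin (n + 1)` by definition
    exact ZMod.addOrderOf_one (n + 1)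

theorem finRotate_mem_permSet {A : Set ℕ} {a : ℕ} (ha : a ∈ A) : finRotate a ∈ permSet A a :=
  fun i => (minimalPeriod_finRotate a i).symm ▸ ha

theorem permCongr_sumCongr_mem_permSet {A : Set ℕ} {m n : ℕ} {σ : Equiv.Perm (Fin m)}
    {τ : Equiv.Perm (Fin n)} (hσ : σ ∈ permSet A m) (hτ : τ ∈ permSet A n) :
    finSumFinEquiv.permCongr (σ.sumCongr τ) ∈ permSet A (m + n) := by
  intro i
  obtain ⟨x, rfl⟩ := finSumFinEquiv.surjective i
  rw [Equiv.Perm.minimalPeriod_permCongr_apply]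
  cases x with
  | inl y => exact (Equiv.Perm.minimalPeriod_sumCongr_inl σ τ y).symm ▸ hσ y
  | inr y => exact (Equiv.Perm.minimalPeriod_sumCongr_inr σ τ y).symm ▸ hτ y

theorem permSet_nonempty_of_mem_closure {A : Set ℕ} {N : ℕ}
    (hN : N ∈ AddSubmonoid.closure A) : (permSet A N).Nonempty := by
  induction hN using AddSubmonoid.closure_induction with
  | mem a ha => exact ⟨finRotate a, finRotate_mem_permSet ha⟩
  | zero => exact ⟨1, fun i => i.elim0⟩
  | add m n _ _ ihm ihn =>
    obtain ⟨σ, hσ⟩ := ihm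
    obtain ⟨τ, hτ⟩ := ihn
    exact ⟨_, permCongr_sumCongr_mem_permSet hσ hτ⟩

theorem permSet_nonempty_of_large_multiple_of_gcd_general (A : Set ℕ) (D : ℕ)
    (hgcd : ∀ e : ℕ, (∀ a ∈ A, e ∣ a) → e ∣ D) :
    ∃ N₀ : ℕ, ∀ N : ℕ, N₀ ≤ N → D ∣ N → (permSet A N).Nonempty := by
  obtain ⟨N₀, hN₀⟩ := Nat.exists_mem_closure_of_ge A
  have hsetGcd : Nat.setGcd A ∣ D := hgcd _ fun _ => Nat.setGcd_dvd_of_mem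
  exact ⟨N₀, fun N hN hDN => permSet_nonempty_of_mem_closure (hN₀ N hN (hsetGcd.trans hDN))⟩

/-- If `A` is a non-empty set of positive integers and `D = gcd A`, then
`S_N^(A) ≠ ∅` for every sufficiently large multiple `N` of `D`. -/
theorem permSet_nonempty_of_large_multiple_of_gcd (A : Set ℕ) (hA : A.Nonempty)
    (hpos : ∀ a ∈ A, 0 < a) (D : ℕ)
    (hdvd : ∀ a ∈ A, D ∣ a) (hgcd : ∀ e : ℕ, (∀ a ∈ A, e ∣ a) → e ∣ D) :
    ∃ N₀ : ℕ, ∀ N : ℕ, N₀ ≤ N → D ∣ N → (permSet A N).Nonempty :=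
  permSet_nonempty_of_large_multiple_of_gcd_general A D hgcd
end
end

section
/- Let 𝒩 be a neighborhood of the origin in ℂ, let F : 𝒩 → ℂ be analytic with F(0) = 1, let k be a positive integer, let C > 0, and for every positive integer N with t_N := (C/N)^{1/k} ∈ 𝒩 (which holds for all sufficiently large N), let r_N := F(t_N)/t_N. Then: (a) lim_{N→∞} (r_N^k − r_{N−1}^k) = 1/C; (b) lim_{N→∞} (r_N^j − r_{N−1}^j) = 0 for every integer j with 0 ≤ j < k; (c) r_N^N / r_{N−1}^{N−1} is asymptotically equivalent to (eN/C)^{1/k} as N → ∞, i.e., the ratio of the two sides tends to 1. -/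
/-!
Write `t_N = (C/N)^p` with `p = 1/k`, so that `r_N^j = F(t_N)^j (N/C)^{j/k}`. Since
`t_N - t_{N-1} = O(N^{-p-1})` and `F` (hence `F^j`) is strictly differentiable at `0`,
`F(t_N)^j - F(t_{N-1})^j = O(N^{-p-1})`, which is killed by any weight `O(N^q)` with `q < p + 1`.
Thus in `r_N^j - r_{N-1}^j` only the increment of `(N/C)^{j/k}` survives: it is `1/C` for `j = k`
and `O(N^{j/k-1}) → 0` for `j < k`. For (c), `F(t_N)^N / F(t_{N-1})^{N-1} → 1` by the same
estimate, and the remaining real factor reduces to `(N/(N-1))^{N-1} → e`.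
-/

open Filter Topology Asymptotics

theorem HasStrictFDerivAt.isBigO_comp_sub_comp {𝕜 E F α : Type*} [NontriviallyNormedField 𝕜]
    [NormedAddCommGroup E] [NormedSpace 𝕜 E] [NormedAddCommGroup F] [NormedSpace 𝕜 F]
    {f : E → F} {f' : E →L[𝕜] F} {x : E} (hf : HasStrictFDerivAt f f' x)
    {l : Filter α} {u v : α → E} (hu : Tendsto u l (𝓝 x)) (hv : Tendsto v l (𝓝 x)) :
    (fun i => f (u i) - f (v i)) =O[l] fun i => u i - v i :=
  hf.isBigO_sub.comp_tendsto (hu.prodMk_nhds hv)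

theorem isBigO_natCast_rpow_sub_rpow_pred (a : ℝ) :
    (fun N : ℕ => (N : ℝ) ^ a - ((N - 1 : ℕ) : ℝ) ^ a) =O[atTop] fun N => (N : ℝ) ^ (a - 1) := by
  have hderiv : HasDerivAt (fun h : ℝ => (1 - h) ^ a) (-a) 0 := by
    simpa using ((hasDerivAt_id (0 : ℝ)).const_sub 1).rpow_const (p := a) (by norm_num)
  have hsmall : (fun N : ℕ => (1 - 1 / (N : ℝ)) ^ a - 1) =O[atTop] fun N => 1 / (N : ℝ) := by
    simpa [Function.comp_def] using
      hderiv.isBigO_sub.comp_tendsto tendsto_one_div_atTop_nhds_zero_nat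
  refine (((isBigO_refl (fun N : ℕ => (N : ℝ) ^ a) atTop).mul hsmall).neg_left).congr' ?_ ?_
  · filter_upwards [eventually_ge_atTop 1] with N hN
    have hN' : (1 - 1 / (N : ℝ)) = ((N - 1 : ℕ) : ℝ) / N := by
      rw [Nat.cast_sub hN, Nat.cast_one]; field_simp
    rw [hN', Real.div_rpow (by positivity) (by positivity)]
    field_simp
    ring
  · filter_upwards [eventually_ge_atTop 1] with N hN
    rw [Real.rpow_sub_one (by positivity)]
    ring

theorem tendsto_ofReal_of_eq_div_natCast_rpow {C p : ℝ} (hp : 0 < p) {t : ℕ → ℝ}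
    (ht : ∀ N : ℕ, t N = (C / N) ^ p) : Tendsto (fun N => (t N : ℂ)) atTop (𝓝 0) := by
  simpa [Function.comp_def, ht, Real.zero_rpow hp.ne'] using tendsto_ofReal_iff.2
    ((Real.continuousAt_rpow_const 0 p (.inr hp.le)).tendsto.comp
      (tendsto_const_div_atTop_nhds_zero_nat C))

theorem isBigO_div_natCast_rpow_sub_pred {C : ℝ} (hC : 0 ≤ C) (p : ℝ) :
    (fun N : ℕ => (C / N) ^ p - (C / (N - 1 : ℕ)) ^ p) =O[atTop] fun N => (N : ℝ) ^ (-p - 1) := by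
  refine ((isBigO_natCast_rpow_sub_rpow_pred (-p)).const_mul_left (C ^ p)).congr' ?_ .rfl
  filter_upwards with N
  simp only [Real.div_rpow hC (Nat.cast_nonneg _), Real.rpow_neg (Nat.cast_nonneg _)]
  ring

theorem tendsto_natCast_rpow_of_neg {a : ℝ} (ha : a < 0) :
    Tendsto (fun N : ℕ => (N : ℝ) ^ a) atTop (𝓝 0) := by
  simpa [Function.comp_def] using
    (tendsto_rpow_neg_atTop (y := -a) (neg_pos.2 ha)).comp tendsto_natCast_atTop_atTop

theorem tendsto_mul_comp_sub_comp_pred {G : ℂ → ℂ} {G' : ℂ →L[ℂ] ℂ} (hG : HasStrictFDerivAt G G' 0)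
    {C p q : ℝ} (hC : 0 ≤ C) (hp : 0 < p) (hq : q < p + 1) {t : ℕ → ℝ}
    (ht : ∀ N : ℕ, t N = (C / N) ^ p) {f : ℕ → ℂ} (hf : f =O[atTop] fun N : ℕ => (N : ℝ) ^ q) :
    Tendsto (fun N => f N * (G (t N) - G (t (N - 1)))) atTop (𝓝 0) := by
  have ht0 := tendsto_ofReal_of_eq_div_natCast_rpow hp ht
  have hdiffG := hG.isBigO_comp_sub_comp ht0 (ht0.comp (tendsto_sub_atTop_nat 1))
  have hdifft : (fun N => (t N : ℂ) - t (N - 1)) =O[atTop] fun N : ℕ => (N : ℝ) ^ (-p - 1) := by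
    simpa only [ht, ← Complex.ofReal_sub] using
      Complex.isBigO_ofReal_left.2 (isBigO_div_natCast_rpow_sub_pred hC p)
  refine (hf.mul (hdiffG.trans hdifft)).trans_tendsto ?_
  refine (tendsto_natCast_rpow_of_neg (a := q + (-p - 1)) (by linarith)).congr' ?_
  filter_upwards [eventually_ge_atTop 1] with N hN
  rw [Real.rpow_add (by positivity)]

theorem tendsto_pow_div_pow_pred {a b : ℕ → ℂ} (ha : Tendsto a atTop (𝓝 1))
    (hb : Tendsto b atTop (𝓝 1))
    (hab : Tendsto (fun N => ((N - 1 : ℕ) : ℂ) * (a N - b N)) atTop (𝓝 0)) :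
    Tendsto (fun N => a N ^ N / b N ^ (N - 1)) atTop (𝓝 1) := by
  have hratio : Tendsto (fun n : ℕ => (n : ℂ) * (a (n + 1) / b (n + 1) - 1)) atTop (𝓝 0) := by
    have hshift := (hab.div hb one_ne_zero).comp (tendsto_add_atTop_nat 1)
    rw [zero_div] at hshift
    refine hshift.congr' ?_
    filter_upwards [(tendsto_add_atTop_nat 1).eventually (hb.eventually_ne one_ne_zero)] with n hn
    simp only [Function.comp_apply, Pi.div_apply, Nat.add_sub_cancel]
    field_simp
  have hpow := (Complex.tendsto_one_add_pow_exp_of_tendsto hratio).comp (tendsto_sub_atTop_nat 1)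
  rw [Complex.exp_zero] at hpow
  have hprod := ha.mul hpow
  rw [one_mul] at hprod
  refine hprod.congr' ?_
  filter_upwards [eventually_ge_atTop 1] with N hN
  obtain ⟨n, rfl⟩ : ∃ n, N = n + 1 := ⟨N - 1, by omega⟩
  simp only [Function.comp_apply, Nat.add_sub_cancel, add_sub_cancel, div_pow, pow_succ']
  ring

theorem tendsto_rpow_div_rpow_pred {C : ℝ} (hC : 0 < C) (p : ℝ) :
    Tendsto (fun N : ℕ => ((N : ℝ) / C) ^ (N * p) / (((N - 1 : ℕ) : ℝ) / C) ^ ((N - 1 : ℕ) * p) /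
      (Real.exp 1 * N / C) ^ p) atTop (𝓝 1) := by
  have he := (Real.tendsto_one_add_div_pow_exp 1).comp (tendsto_sub_atTop_nat 1)
  have hlim := (he.div_const (Real.exp 1)).rpow_const (p := p) (.inl (by simp))
  rw [div_self (Real.exp_ne_zero 1), Real.one_rpow] at hlim
  refine hlim.congr' ?_
  filter_upwards [eventually_ge_atTop 2] with N hN
  obtain ⟨m, rfl⟩ : ∃ m, N = m + 1 := ⟨N - 1, by omega⟩
  have hm : (0 : ℝ) < m := by exact_mod_cast (by omega : 0 < m)
  have hsplit : ((m + 1 : ℕ) : ℝ) / C = (1 + 1 / m) * (m / C) := by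
    push_cast; field_simp
  simp only [Function.comp_apply, Nat.add_sub_cancel]
  rw [hsplit, mul_div_assoc, hsplit, Real.mul_rpow (by positivity) (by positivity),
    Real.mul_rpow (by positivity) (by positivity), Real.mul_rpow (by positivity) (by positivity),
    Real.div_rpow (by positivity) (by positivity), ← Real.rpow_natCast_mul (by positivity)]
  push_cast
  rw [add_mul, one_mul, Real.rpow_add (by positivity), Real.rpow_add (by positivity)]
  field_simp

theorem tendsto_div_rpow_sub_pred {C q : ℝ} (hC : 0 ≤ C) (hq : q < 1) :
    Tendsto (fun N : ℕ => ((N : ℝ) / C) ^ q - (((N - 1 : ℕ) : ℝ) / C) ^ q) atTop (𝓝 0) := by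
  refine (((isBigO_natCast_rpow_sub_rpow_pred q).const_mul_left (C ^ q)⁻¹).trans_tendsto
    (tendsto_natCast_rpow_of_neg (by linarith))).congr' (Eventually.of_forall fun N => ?_)
  simp only [Real.div_rpow (Nat.cast_nonneg _) hC]
  ring

namespace SaddlePoint

variable {F : ℂ → ℂ} {C : ℝ} {k : ℕ} {t : ℕ → ℝ} {r : ℕ → ℂ}

theorem pow_eq_mul_rpow (hC : 0 ≤ C) (ht : ∀ N : ℕ, t N = (C / N) ^ ((1 : ℝ) / k))
    (hr : ∀ N : ℕ, r N = F (t N) / t N) (N j : ℕ) :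
    r N ^ j = F (t N) ^ j * (((N / C) ^ ((j : ℝ) / k) : ℝ) : ℂ) := by
  rw [hr, div_pow, ← Complex.ofReal_pow, ht, ← Real.rpow_mul_natCast (by positivity),
    one_div_mul_eq_div, div_eq_mul_inv, ← Complex.ofReal_inv, ← Real.inv_rpow (by positivity),
    inv_div]

theorem tendsto_comp_of_eq_div_natCast_rpow (hF : ContinuousAt F 0) (hF0 : F 0 = 1)
    (ht : ∀ N : ℕ, t N = (C / N) ^ ((1 : ℝ) / k)) (hk : 0 < k) :
    Tendsto (fun N => F (t N)) atTop (𝓝 1) := by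
  simpa [Function.comp_def, hF0] using
    hF.tendsto.comp (tendsto_ofReal_of_eq_div_natCast_rpow (by positivity) ht)

theorem tendsto_pow_sub_pow_pred (hF : AnalyticAt ℂ F 0) (hF0 : F 0 = 1) (hC : 0 < C)
    (ht : ∀ N : ℕ, t N = (C / N) ^ ((1 : ℝ) / k)) (hr : ∀ N : ℕ, r N = F (t N) / t N)
    (hk : 0 < k) {j : ℕ} (hj : j ≤ k) {L : ℝ}
    (hL : Tendsto (fun N : ℕ => ((N : ℝ) / C) ^ ((j : ℝ) / k) -
      (((N - 1 : ℕ) : ℝ) / C) ^ ((j : ℝ) / k)) atTop (𝓝 L)) :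
    Tendsto (fun N => r N ^ j - r (N - 1) ^ j) atTop (𝓝 L) := by
  have hb : (fun N : ℕ => (((N / C) ^ ((j : ℝ) / k) : ℝ) : ℂ)) =O[atTop]
      fun N : ℕ => (N : ℝ) ^ ((j : ℝ) / k) := by
    refine Complex.isBigO_ofReal_left.2 <|
      ((isBigO_refl _ _).const_mul_left (C ^ ((j : ℝ) / k))⁻¹).congr' ?_ .rfl
    filter_upwards with N
    rw [Real.div_rpow (Nat.cast_nonneg _) hC.le]
    ring
  have hq : (j : ℝ) / k < 1 / k + 1 :=
    (div_le_one_of_le₀ (by exact_mod_cast hj) k.cast_nonneg).trans_lt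
      (lt_add_of_pos_left 1 (by positivity))
  have hdiff := tendsto_mul_comp_sub_comp_pred (hF.pow j).hasStrictFDerivAt hC.le
    (by positivity) hq ht hb
  have hlast : Tendsto (fun N => F (t (N - 1)) ^ j) atTop (𝓝 1) := by
    simpa using ((tendsto_comp_of_eq_div_natCast_rpow hF.continuousAt hF0 ht hk).comp
      (tendsto_sub_atTop_nat 1)).pow j
  -- `r_N^j - r_{N-1}^j = b_N (G(t_N) - G(t_{N-1})) + (b_N - b_{N-1}) G(t_{N-1})`,
  -- where `b_N = (N/C)^{j/k}` and `G = F^j`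
  have hsum := hdiff.add ((tendsto_ofReal_iff.2 hL).mul hlast)
  rw [zero_add, mul_one] at hsum
  refine hsum.congr' (Eventually.of_forall fun N => ?_)
  simp only [pow_eq_mul_rpow hC.le ht hr, Pi.pow_apply]
  push_cast
  ring

theorem tendsto_pow_sub_pow_pred_self (hF : AnalyticAt ℂ F 0) (hF0 : F 0 = 1) (hC : 0 < C)
    (ht : ∀ N : ℕ, t N = (C / N) ^ ((1 : ℝ) / k)) (hr : ∀ N : ℕ, r N = F (t N) / t N)
    (hk : 0 < k) : Tendsto (fun N => r N ^ k - r (N - 1) ^ k) atTop (𝓝 (1 / (C : ℂ))) := by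
  have hL : Tendsto (fun N : ℕ => ((N : ℝ) / C) ^ ((k : ℝ) / k) -
      (((N - 1 : ℕ) : ℝ) / C) ^ ((k : ℝ) / k)) atTop (𝓝 (1 / C)) := by
    rw [div_self (by positivity)]
    refine tendsto_const_nhds.congr' ?_
    filter_upwards [eventually_ge_atTop 1] with N hN
    rw [Real.rpow_one, Real.rpow_one, Nat.cast_sub hN]
    ring
  simpa using tendsto_pow_sub_pow_pred hF hF0 hC ht hr hk le_rfl hL

theorem tendsto_pow_sub_pow_pred_of_lt (hF : AnalyticAt ℂ F 0) (hF0 : F 0 = 1) (hC : 0 < C)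
    (ht : ∀ N : ℕ, t N = (C / N) ^ ((1 : ℝ) / k)) (hr : ∀ N : ℕ, r N = F (t N) / t N)
    {j : ℕ} (hj : j < k) : Tendsto (fun N => r N ^ j - r (N - 1) ^ j) atTop (𝓝 0) := by
  have hk : 0 < k := by omega
  simpa using tendsto_pow_sub_pow_pred hF hF0 hC ht hr hk hj.le
    (tendsto_div_rpow_sub_pred hC.le ((div_lt_one (by positivity)).2 (by exact_mod_cast hj)))

theorem tendsto_pow_div_pow_pred_div_rpow (hF : AnalyticAt ℂ F 0) (hF0 : F 0 = 1) (hC : 0 < C)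
    (ht : ∀ N : ℕ, t N = (C / N) ^ ((1 : ℝ) / k)) (hr : ∀ N : ℕ, r N = F (t N) / t N)
    (hk : 0 < k) :
    Tendsto (fun N => (r N ^ N / r (N - 1) ^ (N - 1)) /
      (((Real.exp 1 * N / C) ^ ((1 : ℝ) / k) : ℝ) : ℂ)) atTop (𝓝 1) := by
  have hp : (0 : ℝ) < 1 / k := by positivity
  have hFt := tendsto_comp_of_eq_div_natCast_rpow hF.continuousAt hF0 ht hk
  have hpred : (fun N : ℕ => ((N - 1 : ℕ) : ℂ)) =O[atTop] fun N : ℕ => (N : ℝ) ^ (1 : ℝ) := by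
    refine IsBigO.of_bound 1 (Eventually.of_forall fun N => ?_)
    simp only [Complex.norm_natCast, Real.rpow_one, Real.norm_natCast, one_mul]
    exact_mod_cast N.sub_le 1
  have hFpart := tendsto_pow_div_pow_pred hFt (hFt.comp (tendsto_sub_atTop_nat 1))
    (tendsto_mul_comp_sub_comp_pred hF.hasStrictFDerivAt hC.le hp (by linarith) ht hpred)
  have hreal := tendsto_rpow_div_rpow_pred hC (1 / k)
  simp only [mul_one_div] at hreal
  have hprod := hFpart.mul (tendsto_ofReal_iff.2 hreal)
  rw [Complex.ofReal_one, one_mul] at hprod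
  refine hprod.congr fun N => ?_
  simp only [Function.comp_apply, pow_eq_mul_rpow hC.le ht hr]
  push_cast
  ring

end SaddlePoint

/-- Let `𝒩` be a neighborhood of the origin in `ℂ`, `F` analytic on `𝒩` with
`F(0) = 1`, `k ≥ 1`, `C > 0`, `t_N = (C/N)^{1/k}` (positive real root) and
`r_N = F(t_N)/t_N`. Then (a) `r_N^k − r_{N−1}^k → 1/C`; (b) `r_N^j − r_{N−1}^j → 0`
for `0 ≤ j < k`; (c) `r_N^N / r_{N−1}^{N−1} ∼ (eN/C)^{1/k}` as `N → ∞`. -/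
theorem analytic_saddle_point_facts (𝒩 : Set ℂ) (h𝒩 : 𝒩 ∈ 𝓝 (0 : ℂ))
    (F : ℂ → ℂ) (hF : ∀ z ∈ 𝒩, AnalyticAt ℂ F z) (hF0 : F 0 = 1)
    (k : ℕ) (hk : 0 < k) (C : ℝ) (hC : 0 < C)
    (t : ℕ → ℝ) (ht : ∀ N : ℕ, t N = (C / N) ^ ((1 : ℝ) / k))
    (r : ℕ → ℂ) (hr : ∀ N : ℕ, r N = F ((t N : ℂ)) / ((t N : ℂ))) :
    Tendsto (fun N => r N ^ k - r (N - 1) ^ k) atTop (𝓝 (1 / (C : ℂ))) ∧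
    (∀ j : ℕ, j < k →
      Tendsto (fun N => r N ^ j - r (N - 1) ^ j) atTop (𝓝 0)) ∧
    Tendsto
      (fun N => (r N ^ N / r (N - 1) ^ (N - 1)) /
        (((Real.exp 1 * N / C) ^ ((1 : ℝ) / k) : ℝ) : ℂ))
      atTop (𝓝 1) := by
  have hFa : AnalyticAt ℂ F 0 := hF 0 (mem_of_mem_nhds h𝒩)
  exact ⟨SaddlePoint.tendsto_pow_sub_pow_pred_self hFa hF0 hC ht hr hk,
    fun _ hj => SaddlePoint.tendsto_pow_sub_pow_pred_of_lt hFa hF0 hC ht hr hj,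
    SaddlePoint.tendsto_pow_div_pow_pred_div_rpow hFa hF0 hC ht hr hk⟩
end

section
/- Let n and N be positive integers and let w_1,…,w_n ∈ 𝔽∖{e}. Let Γ be a graph having n distinct connected components Γ_1,…,Γ_n with Γ_a isomorphic to the word-graph Γ_{w_a} for each a. Suppose S_N^{(A_r)} ≠ ∅ for every r∈[s]. Then E[ Π_{a=1}^n tr U_{w_a}(σ) ] = (1/N^n) Σ_{π ∈ C(Γ)} [ N! / (N − |π|)! ] · Π_{r=1}^s p_N^{(A_r)}( (Γ/π)(r) ), where |π| is the number of blocks of π, and the right-hand side depends only on the isomorphism class of Γ. -/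
noncomputable section

open Filter Topology

noncomputable section

open Filter Topology

/-- The permutation matrix of `σ`: `(M_σ)_{i,j} = 1` iff `σ(j) = i`. -/
def permMat (N : ℕ) (σ : Equiv.Perm (Fin N)) : Matrix (Fin N) (Fin N) ℂ :=
  Matrix.of fun i j => if σ j = i then 1 else 0

/-- The normalized trace of an `N × N` matrix. -/
def ntr {N : ℕ} (M : Matrix (Fin N) (Fin N) ℂ) : ℂ := Matrix.trace M / (N : ℂ)

/-- `Uword N σ w` is the matrix obtained from the word `w` by replacing each letter
`g_r` (encoded `(r, true)`) by `M_{σ_r}` and each `g_r^*` (encoded `(r, false)`) by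
`M_{σ_r}^* = M_{σ_r⁻¹}`, and multiplying; the empty word gives the identity. -/
def Uword {s : ℕ} (N : ℕ) (σ : Fin s → Equiv.Perm (Fin N))
    (w : List (Fin s × Bool)) : Matrix (Fin N) (Fin N) ℂ :=
  (w.map fun p => if p.2 then permMat N (σ p.1) else permMat N ((σ p.1)⁻¹)).prod

/-- `EE A N h` is the average of `h(σ₁,…,σ_s)` over all tuples
`(σ₁,…,σ_s) ∈ S_N^{(A_1)} × ⋯ × S_N^{(A_s)}`. -/
def EE {s : ℕ} (A : Fin s → Set ℕ) (N : ℕ)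
    (h : (Fin s → Equiv.Perm (Fin N)) → ℂ) : ℂ :=
  (∑ᶠ σ : {σ : Fin s → Equiv.Perm (Fin N) // ∀ r, σ r ∈ permSet (A r) N}, h σ.1) /
    ∏ r : Fin s, (Nat.card ↥(permSet (A r) N) : ℂ)

namespace CGraph

/-- The quotient of `Γ` by a partition (setoid) `π` of its vertex set. -/
def quot' {V : Type} {s : ℕ} (Γ : CGraph V s) (π : Setoid ↥Γ.verts) :
    CGraph (Quotient π) s where
  verts := Set.univ
  finite := by
    haveI : Finite ↥Γ.verts := Γ.finite.to_subtype
    haveI : Finite (Quotient π) := Quotient.finite π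
    exact Set.finite_univ
  nonem := by
    obtain ⟨a, ha⟩ := Γ.nonem
    exact ⟨Quotient.mk π ⟨a, ha⟩, Set.mem_univ _⟩
  E := fun r A B => ∃ a b : ↥Γ.verts, Γ.E r a.1 b.1 ∧
    Quotient.mk π a = A ∧ Quotient.mk π b = B
  memL := fun _ _ _ _ => Set.mem_univ _
  memR := fun _ _ _ _ => Set.mem_univ _

/-- `π` (a partition of the vertex set of `Γ`) is a congruence of `Γ`. -/
def IsCongruence' {V : Type} {s : ℕ} (Γ : CGraph V s) (π : Setoid ↥Γ.verts) : Prop :=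
  ∀ (r : Fin s) (a₁ b₁ a₂ b₂ : ↥Γ.verts), Γ.E r a₁.1 b₁.1 → Γ.E r a₂.1 b₂.1 →
    (π.r a₁ a₂ ↔ π.r b₁ b₂)

end CGraph

/-- `Δ` is an `A`-graph (with `dA = sup A`): a monocolored admissible graph all of
whose loops have length in `A` and all of whose strings have length `< sup A`. -/
def IsAGraph {W : Type} {s : ℕ} (A : Set ℕ) (dA : ℕ∞) (Δ : CGraph W s) : Prop :=
  Δ.Admissible ∧ (∀ P : CGraph W s, P.IsLoopOf Δ → P.edgeCount ∈ A) ∧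
    ∀ P : CGraph W s, P.IsStringOf Δ → (P.edgeCount : ℕ∞) < dA

/-- `pGraph A N Δ` is `p_N^(A)(Δ)`: the probability that a uniformly random
permutation from `S_N^(A)` is compatible with `f(Δ)` for an injective relabeling
`f` of the vertices of `Δ` by elements of `{1,…,N}` (this probability does not
depend on `f`, so we average over all pairs `(f, σ)`). -/
def pGraph {W : Type} {s : ℕ} (A : Set ℕ) (N : ℕ) (Δ : CGraph W s) : ℝ :=
  (Nat.card {q : (↥Δ.verts → Fin N) × Equiv.Perm (Fin N) //
      Function.Injective q.1 ∧ q.2 ∈ permSet A N ∧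
        ∀ (r : Fin s) (a b : ↥Δ.verts), Δ.E r a.1 b.1 → q.2 (q.1 a) = q.1 b} : ℝ) /
    ((Nat.card {f : ↥Δ.verts → Fin N // Function.Injective f} : ℝ) *
      (Nat.card ↥(permSet A N) : ℝ))


/-!
`N · tr U_w(σ)` is the number of fixed points of the permutation with matrix `U_w(σ)`, and a
fixed point is the same as a labelling of the vertices of `Γ_w` by `{1,…,N}` mapping every
`r`-edge `a → b` by `σ_r`. Hence `N^n ∏ₐ tr U_{w_a}(σ)` counts the labellings of `Γ` compatible
with `σ`. Sorted by their kernel `π`, these become injective compatible labellings of `Γ/π`;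
such a labelling embeds each `(Γ/π)(r)` into the functional graph of `σ_r`, whose cycles have
lengths in `A_r`, so only `π ∈ C(Γ)` contribute. For fixed `π`, conjugating `σ_r` shows that the
number of `σ_r` compatible with an injective labelling does not depend on the labelling, which
gives the factor `N!/(N - |π|)! · ∏_r p_N^{(A_r)}((Γ/π)(r))`.
-/

open Function Equiv

theorem sum_card_subtype_comm {α β : Type*} [Fintype α] [Fintype β] (R : α → β → Prop) :
    ∑ a, Nat.card {b // R a b} = ∑ b, Nat.card {a // R a b} := by
  rw [← Nat.card_sigma, ← Nat.card_sigma,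
    ← Nat.card_congr (Equiv.subtypeProdEquivSigmaSubtype R),
    ← Nat.card_congr (Equiv.subtypeProdEquivSigmaSubtype fun b a => R a b)]
  exact Nat.card_congr ((Equiv.prodComm α β).subtypeEquiv fun _ => Iff.rfl)

theorem card_injective_eq_descFactorial {ι : Type*} [Finite ι] (N : ℕ) :
    Nat.card {f : ι → Fin N // Injective f} = N.descFactorial (Nat.card ι) := by
  have := Fintype.ofFinite ι
  rw [Nat.card_congr (Equiv.subtypeInjectiveEquivEmbedding _ _), Nat.card_eq_fintype_card,
    Fintype.card_embedding_eq, Fintype.card_fin, Nat.card_eq_fintype_card]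

instance Setoid.finite {T : Type*} [Finite T] : Finite (Setoid T) :=
  Finite.of_injective (fun π : Setoid T => π.r) fun _ _ h =>
    Setoid.ext fun a b => iff_of_eq (congrFun₂ h a b)

section KernelDecomposition

variable {T X : Type*}

def kerFiberEquiv (C : (T → X) → Prop) (π : Setoid T) :
    {φ : {φ : T → X // C φ} // Setoid.ker φ.1 = π} ≃
      {ψ : Quotient π → X // Injective ψ ∧ C (ψ ∘ Quotient.mk π)} where
  toFun φ := ⟨Quotient.lift φ.1.1 fun a b h => by rw [← φ.2] at h; exact h,
    fun x y => Quotient.inductionOn₂ x y fun a b h => Quotient.sound (by rw [← φ.2]; exact h),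
    φ.1.2⟩
  invFun ψ := ⟨⟨ψ.1 ∘ Quotient.mk π, ψ.2.2⟩,
    Setoid.ext fun _ _ => ψ.2.1.eq_iff.trans Quotient.eq⟩
  left_inv _ := rfl
  right_inv ψ := Subtype.ext <| funext fun x => Quotient.inductionOn x fun _ => rfl

theorem card_eq_sum_card_injective_quotient [Finite T] [Finite X] [Fintype (Setoid T)]
    (C : (T → X) → Prop) :
    Nat.card {φ : T → X // C φ} =
      ∑ π : Setoid T, Nat.card {ψ : Quotient π → X // Injective ψ ∧ C (ψ ∘ Quotient.mk π)} := by
  rw [← Nat.card_congr (Equiv.sigmaFiberEquiv fun φ : {φ // C φ} => Setoid.ker φ.1),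
    Nat.card_sigma]
  exact Finset.sum_congr rfl fun π _ => Nat.card_congr (kerFiberEquiv C π)

end KernelDecomposition

namespace Equiv.Perm

variable {α : Type*}

theorem ncard_sameCycle [Finite α] (τ : Perm α) (x : α) :
    {y | τ.SameCycle x y}.ncard = minimalPeriod τ x := by
  have horbit : {y | τ.SameCycle x y} = MulAction.orbit (Subgroup.zpowers τ) x := by
    ext y
    constructor
    · rintro ⟨i, rfl⟩
      exact ⟨⟨τ ^ i, i, rfl⟩, rfl⟩
    · rintro ⟨⟨_, i, rfl⟩, rfl⟩
      exact ⟨i, rfl⟩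
  have := Fintype.ofFinite (MulAction.orbit (Subgroup.zpowers τ) x)
  rw [horbit, ← Nat.card_coe_set_eq, Nat.card_eq_fintype_card, ← MulAction.minimalPeriod_eq_card]
  rfl

theorem minimalPeriod_conj (θ τ : Perm α) (x : α) :
    minimalPeriod (θ * τ * θ⁻¹) (θ x) = minimalPeriod τ x :=
  minimalPeriod_eq_minimalPeriod_iff.2 fun n => by
    simp only [IsPeriodicPt, IsFixedPt, ← Perm.coe_pow]
    rw [conj_pow, Perm.mul_apply, Perm.mul_apply, Perm.inv_def, θ.symm_apply_apply,
      θ.injective.eq_iff]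

theorem exists_apply_eq_of_injective {ι : Type*} [Finite α] {f g : ι → α}
    (hf : Injective f) (hg : Injective g) : ∃ θ : Perm α, ∀ x, θ (f x) = g x := by
  classical
  let e := (Equiv.ofInjective f hf).symm.trans (Equiv.ofInjective g hg)
  exact ⟨e.extendSubtype, fun x => by
    rw [e.extendSubtype_apply_of_mem _ (Set.mem_range_self x)]
    simp [e, Equiv.ofInjective_symm_apply]⟩

end Equiv.Perm

section CyclicLabeling

variable {α β : Type*} (p : β → Perm α) (w : List β)

theorem prod_drop_map_eq_mul {k : ℕ} (hk : k < w.length) :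
    ((w.map p).drop k).prod = p w[k] * ((w.map p).drop (k + 1)).prod := by
  rw [List.drop_eq_getElem_cons (by simpa using hk), List.prod_cons, List.getElem_map]

theorem eq_prod_drop_apply_of_cyclic (hw : 0 < w.length) {i : Fin w.length → α}
    (hi : ∀ k, i k = p (w.get k) (i (nxt k))) (k : Fin w.length) :
    i k = ((w.map p).drop k).prod (i ⟨0, hw⟩) := by
  suffices key : ∀ m ≤ w.length, ∀ hm : m < w.length,
      i ⟨m, hm⟩ = ((w.map p).drop m).prod (i ⟨0, hw⟩) from key k k.2.le k.2
  intro m hm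
  induction hm using Nat.decreasingInduction with
  | self => exact fun h => absurd h (lt_irrefl _)
  | of_succ m hm ih =>
    intro _
    rw [hi, prod_drop_map_eq_mul p w hm, Perm.mul_apply]
    congr 1
    rcases (show m + 1 ≤ w.length from hm).lt_or_eq with hlt | heq
    · rw [← ih hlt]; congr 1; ext; exact Nat.mod_eq_of_lt hlt
    · rw [List.drop_of_length_le (by simp [heq])]
      congr 1; ext; simp [nxt, heq]

theorem prod_drop_apply_cyclic {x : α} (hx : (w.map p).prod x = x) (k : Fin w.length) :
    ((w.map p).drop k).prod x = p (w.get k) (((w.map p).drop (nxt k)).prod x) := by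
  rw [prod_drop_map_eq_mul p w k.2, Perm.mul_apply, List.get_eq_getElem]
  congr 1
  rcases (show k.1 + 1 ≤ w.length from k.2).lt_or_eq with hlt | heq
  · simp [nxt, Nat.mod_eq_of_lt hlt]
  · rw [List.drop_of_length_le (by simp [heq])]
    simp [nxt, heq, hx]

theorem card_cyclic_labelings (hw : w ≠ []) :
    Nat.card {i : Fin w.length → α // ∀ k, i k = p (w.get k) (i (nxt k))} =
      Nat.card (fixedPoints (w.map p).prod) := by
  have hw : 0 < w.length := List.length_pos_iff.mpr hw
  refine Nat.card_congr
    { toFun := fun i => ⟨i.1 ⟨0, hw⟩, ?_⟩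
      invFun := fun x => ⟨fun k => ((w.map p).drop k).prod x.1, prod_drop_apply_cyclic p w x.2⟩
      left_inv := fun i =>
        Subtype.ext (funext fun k => (eq_prod_drop_apply_of_cyclic p w hw i.2 k).symm)
      right_inv := fun x => Subtype.ext x.2 }
  exact (eq_prod_drop_apply_of_cyclic p w hw i.2 ⟨0, hw⟩).symm

end CyclicLabeling

theorem permMat_eq_permMatrixHom (N : ℕ) (σ : Perm (Fin N)) :
    permMat N σ = Matrix.permMatrixHom σ := by
  ext i j
  simp [permMat, PEquiv.toMatrix_apply, Equiv.symm_apply_eq σ, @eq_comm _ i]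

theorem trace_permMat (N : ℕ) (σ : Perm (Fin N)) :
    (permMat N σ).trace = Nat.card (fixedPoints σ) := by
  rw [permMat_eq_permMatrixHom, Matrix.permMatrixHom_apply, ← Matrix.transpose_permMatrix,
    Matrix.trace_transpose, Matrix.trace_permutation, Nat.card_coe_set_eq]

def letterPerm {s : ℕ} {α : Type*} (σ : Fin s → Perm α) (x : Fin s × Bool) : Perm α :=
  if x.2 then σ x.1 else (σ x.1)⁻¹

theorem Uword_eq_permMat {s : ℕ} (N : ℕ) (σ : Fin s → Perm (Fin N))
    (w : List (Fin s × Bool)) :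
    Uword N σ w = permMat N (w.map (letterPerm σ)).prod := by
  rw [permMat_eq_permMatrixHom, MonoidHom.map_list_prod, List.map_map, Uword]
  congr 1
  refine List.map_congr_left fun x _ => ?_
  by_cases hx : x.2 <;> simp [letterPerm, hx, permMat_eq_permMatrixHom]

theorem conj_mem_permSet_iff {A : Set ℕ} {N : ℕ} {τ : Perm (Fin N)} (θ : Perm (Fin N)) :
    θ * τ * θ⁻¹ ∈ permSet A N ↔ τ ∈ permSet A N := by
  refine (θ.forall_congr_right (q := fun i => minimalPeriod (θ * τ * θ⁻¹) i ∈ A)).symm.trans ?_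
  simp only [Perm.minimalPeriod_conj]
  rfl

abbrev PermTuple {s : ℕ} (A : Fin s → Set ℕ) (N : ℕ) :=
  {σ : Fin s → Perm (Fin N) // ∀ r, σ r ∈ permSet (A r) N}

namespace CGraph

variable {V W α : Type} {s : ℕ}

instance inst_s16 (Γ : CGraph V s) : Std.Symm Γ.Adj := ⟨fun _ _ ⟨r, h⟩ => ⟨r, h.symm⟩⟩

theorem IsComponent.edge_of_mem_left {C Γ : CGraph V s} (hC : C.IsComponent Γ) {r : Fin s}
    {a b : V} (ha : a ∈ C.verts) (hab : Γ.E r a b) : C.E r a b := by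
  let S := insert b C.verts
  -- `C` together with the edge `a → b` is still connected, so by maximality it is `C`.
  let C' : CGraph V s :=
    { verts := S
      finite := C.finite.insert b
      nonem := ⟨b, Set.mem_insert b _⟩
      E := fun r' x y => Γ.E r' x y ∧ x ∈ S ∧ y ∈ S
      memL := fun _ _ _ h => h.2.1
      memR := fun _ _ _ h => h.2.2 }
  have hCC' : C.Subgraph C' := ⟨Set.subset_insert b _, fun r' x y h =>
    ⟨hC.1.2 r' x y h, Set.mem_insert_of_mem b (C.memL r' x y h),
      Set.mem_insert_of_mem b (C.memR r' x y h)⟩⟩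
  have hC'Γ : C'.Subgraph Γ :=
    ⟨Set.insert_subset (Γ.memR r a b hab) hC.1.1, fun _ _ _ h => h.1⟩
  have hlift : ∀ x y, C.Adj x y → C'.Adj x y := fun x y ⟨r', h⟩ =>
    ⟨r', h.imp (hCC'.2 r' x y) (hCC'.2 r' y x)⟩
  have hreach : ∀ x ∈ S, Relation.ReflTransGen C'.Adj x a := by
    rintro x (rfl | hx)
    · exact .single ⟨r, .inr ⟨hab, hCC'.1 ha, Set.mem_insert _ _⟩⟩
    · exact Relation.ReflTransGen.mono hlift _ _ (hC.2.1 x hx a ha)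
  have hC' : C'.Connected := fun x hx y hy =>
    (hreach x hx).trans (Std.Symm.symm _ _ (hreach y hy))
  exact (hC.2.2 C' hC'Γ hC' hCC').2 r a b ⟨hab, hCC'.1 ha, Set.mem_insert _ _⟩

def Compatible (Γ : CGraph V s) (σ : Fin s → Perm α) (φ : Γ.verts → α) : Prop :=
  ∀ r (a b : Γ.verts), Γ.E r a b → σ r (φ a) = φ b

theorem Iso.card_compatible {Γ₁ : CGraph V s} {Γ₂ : CGraph W s} (h : Iso Γ₁ Γ₂)
    (σ : Fin s → Perm α) :
    Nat.card {φ // Γ₁.Compatible σ φ} = Nat.card {φ // Γ₂.Compatible σ φ} := by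
  obtain ⟨Φ, hbij, hE⟩ := h
  let e : Γ₁.verts ≃ Γ₂.verts := hbij.equiv Φ
  refine Nat.card_congr (Equiv.subtypeEquiv (e.arrowCongr (Equiv.refl α)) fun φ => ?_)
  refine forall_congr' fun r => e.forall_congr fun {x} => e.forall_congr fun {y} => ?_
  simp only [Equiv.arrowCongr_apply, Equiv.symm_apply_apply, Equiv.coe_refl, Function.comp_apply,
    id]
  exact imp_congr_left (hE r x y x.2 y.2).symm

theorem compatible_iff_forall_components {ι : Type} {Γ : CGraph V s} {Γc : ι → CGraph V s}
    (hcomp : ∀ a, (Γc a).IsComponent Γ) (hcover : Γ.verts = ⋃ a, (Γc a).verts)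
    (σ : Fin s → Perm α) (φ : Γ.verts → α) :
    Γ.Compatible σ φ ↔ ∀ a, (Γc a).Compatible σ (φ ∘ Set.inclusion (hcomp a).1.1) := by
  refine ⟨fun h a r x y hxy => h r _ _ ((hcomp a).1.2 r x y hxy), fun h r x y hxy => ?_⟩
  obtain ⟨a, hx⟩ := Set.mem_iUnion.mp (show x.1 ∈ ⋃ a, (Γc a).verts from hcover ▸ x.2)
  have hxy' := (hcomp a).edge_of_mem_left hx hxy
  exact h a r ⟨x, hx⟩ ⟨y, (Γc a).memR r x y hxy'⟩ hxy'

theorem card_compatible_eq_prod_components {ι : Type} [Fintype ι] {Γ : CGraph V s}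
    {Γc : ι → CGraph V s} (hcomp : ∀ a, (Γc a).IsComponent Γ)
    (hdisj : ∀ a b, a ≠ b → Disjoint (Γc a).verts (Γc b).verts)
    (hcover : Γ.verts = ⋃ a, (Γc a).verts) (σ : Fin s → Perm α) :
    Nat.card {φ // Γ.Compatible σ φ} = ∏ a, Nat.card {φ // (Γc a).Compatible σ φ} := by
  let e : Γ.verts ≃ Σ a, (Γc a).verts :=
    (Equiv.setCongr hcover).trans (Set.unionEqSigmaOfDisjoint hdisj)
  rw [← Nat.card_pi]
  exact Nat.card_congr ((Equiv.subtypeEquiv ((e.arrowCongr (Equiv.refl α)).trans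
    (Equiv.piCurry fun _ _ => α)) fun φ =>
      compatible_iff_forall_components hcomp hcover σ φ).trans Equiv.subtypePiEquivPi)

theorem wordGraph_compatible_iff (w : List (Fin s × Bool)) (hw : w ≠ [])
    (σ : Fin s → Perm α) (φ : (wordGraph w hw).verts → α) :
    (wordGraph w hw).Compatible σ φ ↔
      ∀ k, φ ⟨k, Set.mem_univ _⟩ = letterPerm σ (w.get k) (φ ⟨nxt k, Set.mem_univ _⟩) := by
  constructor
  · intro h k
    rcases hk : w.get k with ⟨r, _ | _⟩
    · rw [letterPerm, if_neg Bool.false_ne_true, Perm.eq_inv_iff_eq]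
      exact h r _ _ ⟨k, .inr ⟨hk, rfl, rfl⟩⟩
    · exact (h r _ _ ⟨k, .inl ⟨hk, rfl, rfl⟩⟩).symm
  · rintro h r a b ⟨k, ⟨hk, ha, hb⟩ | ⟨hk, ha, hb⟩⟩
    · obtain rfl : a = ⟨nxt k, Set.mem_univ _⟩ := Subtype.ext ha
      obtain rfl : b = ⟨k, Set.mem_univ _⟩ := Subtype.ext hb
      have hφ := h k
      rw [hk] at hφ
      exact hφ.symm
    · obtain rfl : a = ⟨k, Set.mem_univ _⟩ := Subtype.ext ha
      obtain rfl : b = ⟨nxt k, Set.mem_univ _⟩ := Subtype.ext hb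
      have hφ := h k
      rw [hk, letterPerm, if_neg Bool.false_ne_true, Perm.eq_inv_iff_eq] at hφ
      exact hφ

theorem card_compatible_wordGraph (w : List (Fin s × Bool)) (hw : w ≠ [])
    (σ : Fin s → Perm α) :
    Nat.card {φ // (wordGraph w hw).Compatible σ φ} =
      Nat.card (fixedPoints (w.map (letterPerm σ)).prod) := by
  rw [← card_cyclic_labelings _ w hw]
  exact Nat.card_congr (Equiv.subtypeEquiv ((Equiv.Set.univ _).arrowCongr (Equiv.refl α))
    fun φ => wordGraph_compatible_iff w hw σ φ)

theorem compatible_iff_forall_mono (Δ : CGraph W s) (σ : Fin s → Perm α) (φ : Δ.verts → α) :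
    Δ.Compatible σ φ ↔ ∀ r, (Δ.mono r).Compatible (fun _ => σ r) φ :=
  ⟨fun h _ r' a b hab => hab.1 ▸ h r' a b hab.2, fun h r a b hab => h r r a b ⟨rfl, hab⟩⟩

theorem compatible_conj_iff (Δ : CGraph W s) (θ : Perm α) (σ : Fin s → Perm α)
    (f : Δ.verts → α) :
    Δ.Compatible (fun r => θ * σ r * θ⁻¹) (θ ∘ f) ↔ Δ.Compatible σ f := by
  refine forall₄_congr fun r a b _ => ?_
  simp [Perm.mul_apply, Perm.inv_def, θ.injective.eq_iff]

section Quotient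

variable (Γ : CGraph V s) (π : Setoid Γ.verts)

theorem compatible_quot'_iff (σ : Fin s → Perm α) (ψ : (Γ.quot' π).verts → α) :
    (Γ.quot' π).Compatible σ ψ ↔
      Γ.Compatible σ fun v => ψ ⟨Quotient.mk π v, Set.mem_univ _⟩ := by
  refine ⟨fun h r a b hab => h r _ _ ⟨a, b, hab, rfl, rfl⟩, ?_⟩
  rintro h r ⟨-, -⟩ ⟨-, -⟩ ⟨a, b, hab, rfl, rfl⟩
  exact h r a b hab

theorem card_compatible_eq_sum_quot' [Finite α] [Fintype (Setoid Γ.verts)]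
    (σ : Fin s → Perm α) :
    Nat.card {φ // Γ.Compatible σ φ} =
      ∑ π, Nat.card {ψ : (Γ.quot' π).verts → α // Injective ψ ∧ (Γ.quot' π).Compatible σ ψ} := by
  have := Γ.finite.to_subtype
  rw [card_eq_sum_card_injective_quotient]
  refine Finset.sum_congr rfl fun π _ => Nat.card_congr <|
    Equiv.subtypeEquiv ((Equiv.Set.univ _).arrowCongr (Equiv.refl α)).symm fun ψ => ?_
  rw [compatible_quot'_iff]
  exact and_congr (Equiv.injective_comp _ ψ).symm Iff.rfl

theorem isCongruence'_of_compatible {σ : Fin s → Perm α} {ψ : (Γ.quot' π).verts → α}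
    (hψ : Injective ψ) (h : (Γ.quot' π).Compatible σ ψ) : Γ.IsCongruence' π := by
  intro r a₁ b₁ a₂ b₂ h₁ h₂
  rw [compatible_quot'_iff] at h
  have key : ∀ x y, ψ ⟨Quotient.mk π x, Set.mem_univ _⟩ = ψ ⟨Quotient.mk π y, Set.mem_univ _⟩ ↔
      π.r x y :=
    fun x y => hψ.eq_iff.trans (Subtype.mk_eq_mk.trans Quotient.eq)
  have e₁ : σ r (ψ ⟨Quotient.mk π a₁, Set.mem_univ _⟩) = ψ ⟨Quotient.mk π b₁, Set.mem_univ _⟩ :=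
    h r a₁ b₁ h₁
  have e₂ : σ r (ψ ⟨Quotient.mk π a₂, Set.mem_univ _⟩) = ψ ⟨Quotient.mk π b₂, Set.mem_univ _⟩ :=
    h r a₂ b₂ h₂
  rw [← key, ← key, ← e₁, ← e₂, (σ r).injective.eq_iff]

end Quotient

section Paths

variable {Δ P : CGraph W s} {τ : Perm α} {F : W → α}

theorem IsPathOf.verts_subset (hP : P.IsPathOf Δ) : P.verts ⊆ Δ.verts :=
  let ⟨_, hc, _⟩ := hP
  hc.1.1

theorem IsPathOf.connected (hP : P.IsPathOf Δ) : P.Connected :=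
  let ⟨_, hc, _⟩ := hP
  hc.2.1

theorem IsPathOf.exists_color (hP : P.IsPathOf Δ) :
    ∃ r, ∀ r' a b, P.E r' a b → r' = r ∧ Δ.E r' a b :=
  let ⟨r, hc, _⟩ := hP
  ⟨r, hc.1.2⟩

theorem IsPathOf.apply_eq (hP : P.IsPathOf Δ) (hE : ∀ r a b, Δ.E r a b → τ (F a) = F b)
    {r : Fin s} {a b : W} (hab : P.E r a b) : τ (F a) = F b :=
  let ⟨_, hcol⟩ := hP.exists_color
  hE r a b (hcol r a b hab).2

theorem IsPathOf.sameCycle (hP : P.IsPathOf Δ) (hE : ∀ r a b, Δ.E r a b → τ (F a) = F b)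
    {a b : W} (ha : a ∈ P.verts) (hb : b ∈ P.verts) : τ.SameCycle (F a) (F b) := by
  have hab := hP.connected a ha b hb
  clear hb
  induction hab with
  | refl => rfl
  | tail _ hadj ih =>
    obtain ⟨r, h | h⟩ := hadj
    · exact ih.trans (hP.apply_eq hE h ▸ Perm.sameCycle_apply_right.2 .rfl)
    · exact ih.trans (hP.apply_eq hE h ▸ Perm.sameCycle_apply_right.2 .rfl).symm

theorem IsPathOf.edgeCount_eq_ncard_sources (hP : P.IsPathOf Δ) (hF : Set.InjOn F Δ.verts)
    (hE : ∀ r a b, Δ.E r a b → τ (F a) = F b) :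
    P.edgeCount = {a | ∃ r b, P.E r a b}.ncard := by
  obtain ⟨r, hr⟩ := hP.exists_color
  rw [edgeCount, ← Nat.card_coe_set_eq]
  refine Nat.card_congr (Equiv.ofBijective (fun e => ⟨e.1.2.1, e.1.1, e.1.2.2, e.2⟩) ⟨?_, ?_⟩)
  · rintro ⟨⟨r₁, a, b₁⟩, h₁⟩ ⟨⟨r₂, a', b₂⟩, h₂⟩ h
    obtain rfl : a = a' := congrArg Subtype.val h
    obtain rfl : r₁ = r₂ := (hr _ _ _ h₁).1.trans (hr _ _ _ h₂).1.symm
    obtain rfl : b₁ = b₂ := hF (hP.verts_subset (P.memR _ _ _ h₁))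
      (hP.verts_subset (P.memR _ _ _ h₂)) ((hP.apply_eq hE h₁).symm.trans (hP.apply_eq hE h₂))
    rfl
  · rintro ⟨a, r', b, h⟩
    exact ⟨⟨(r', a, b), h⟩, rfl⟩

theorem IsPathOf.ncard_verts_le [Finite α] (hP : P.IsPathOf Δ) (hF : Set.InjOn F Δ.verts)
    (hE : ∀ r a b, Δ.E r a b → τ (F a) = F b) {a : W} (ha : a ∈ P.verts) :
    P.verts.ncard ≤ minimalPeriod τ (F a) := by
  rw [← (hF.mono hP.verts_subset).ncard_image, ← τ.ncard_sameCycle]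
  exact Set.ncard_le_ncard (Set.image_subset_iff.2 fun b hb => hP.sameCycle hE ha hb)
    (Set.toFinite _)

theorem IsLoopOf.ncard_verts_eq [Finite α] (hP : P.IsLoopOf Δ) (hF : Set.InjOn F Δ.verts)
    (hE : ∀ r a b, Δ.E r a b → τ (F a) = F b) {a : W} (ha : a ∈ P.verts) :
    P.verts.ncard = minimalPeriod τ (F a) := by
  rw [← (hF.mono hP.1.verts_subset).ncard_image, ← τ.ncard_sameCycle]
  congr 1
  refine Set.Subset.antisymm (Set.image_subset_iff.2 fun b hb => hP.1.sameCycle hE ha hb) ?_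
  -- Every vertex of a loop has an outgoing edge, so `F '' P.verts` is closed under `τ`.
  intro y hy
  obtain ⟨n, rfl⟩ := hy.exists_nat_pow_eq
  induction n with
  | zero => exact ⟨a, ha, rfl⟩
  | succ n ih =>
    obtain ⟨b, hb, hbn⟩ := ih (Perm.sameCycle_pow_right.2 .rfl)
    obtain ⟨r, c, hbc⟩ := hP.2 b hb
    exact ⟨c, P.memR _ _ _ hbc, by rw [pow_succ', Perm.mul_apply, ← hbn, hP.1.apply_eq hE hbc]⟩

theorem IsLoopOf.edgeCount_eq [Finite α] (hP : P.IsLoopOf Δ) (hF : Set.InjOn F Δ.verts)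
    (hE : ∀ r a b, Δ.E r a b → τ (F a) = F b) {a : W} (ha : a ∈ P.verts) :
    P.edgeCount = minimalPeriod τ (F a) := by
  have hsources : {a | ∃ r b, P.E r a b} = P.verts :=
    Set.Subset.antisymm (fun _ ⟨r, b, h⟩ => P.memL r _ b h) hP.2
  rw [hP.1.edgeCount_eq_ncard_sources hF hE, hsources, hP.ncard_verts_eq hF hE ha]

theorem IsStringOf.edgeCount_lt [Finite α] (hP : P.IsStringOf Δ) (hF : Set.InjOn F Δ.verts)
    (hE : ∀ r a b, Δ.E r a b → τ (F a) = F b) :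
    ∃ a ∈ P.verts, P.edgeCount < minimalPeriod τ (F a) := by
  obtain ⟨a, ha, hsink⟩ : ∃ a ∈ P.verts, ¬∃ r b, P.E r a b := by
    simpa [Closed] using hP.2
  have hsub : {a | ∃ r b, P.E r a b} ⊆ P.verts := fun _ ⟨r, b, h⟩ => P.memL r _ b h
  have hsources := (Set.ssubset_iff_of_subset hsub).2 ⟨a, ha, hsink⟩
  refine ⟨a, ha, ?_⟩
  rw [hP.1.edgeCount_eq_ncard_sources hF hE]
  exact (Set.ncard_lt_ncard hsources P.finite).trans_le (hP.1.ncard_verts_le hF hE ha)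

end Paths

end CGraph

theorem isAGraph_of_injOn {W : Type} {s N : ℕ} {A : Set ℕ} {dA : ℕ∞} {Δ : CGraph W s}
    {τ : Perm (Fin N)} {F : W → Fin N} (hτ : τ ∈ permSet A N) (hA : ∀ m ∈ A, (m : ℕ∞) ≤ dA)
    (hF : Set.InjOn F Δ.verts) (hE : ∀ r a b, Δ.E r a b → τ (F a) = F b) :
    IsAGraph A dA Δ := by
  refine ⟨⟨fun r a b b' h h' => ?_, fun r a a' b h h' => ?_⟩, fun P hP => ?_, fun P hP => ?_⟩
  · exact hF (Δ.memR _ _ _ h) (Δ.memR _ _ _ h') ((hE _ _ _ h).symm.trans (hE _ _ _ h'))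
  · exact hF (Δ.memL _ _ _ h) (Δ.memL _ _ _ h')
      (τ.injective ((hE _ _ _ h).trans (hE _ _ _ h').symm))
  · obtain ⟨a, ha⟩ := P.nonem
    exact hP.edgeCount_eq hF hE ha ▸ hτ (F a)
  · obtain ⟨a, -, hlt⟩ := hP.edgeCount_lt hF hE
    exact (Nat.cast_lt.2 hlt).trans_le (hA _ (hτ (F a)))

theorem isCongruence'_and_isAGraph_of_compatible {V : Type} {s N : ℕ} {A : Fin s → Set ℕ}
    {d : Fin s → ℕ∞} (hA : ∀ r, ∀ m ∈ A r, (m : ℕ∞) ≤ d r) (Γ : CGraph V s)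
    (π : Setoid Γ.verts) {σ : PermTuple A N} {ψ : (Γ.quot' π).verts → Fin N}
    (hψ : Injective ψ) (h : (Γ.quot' π).Compatible σ.1 ψ) :
    Γ.IsCongruence' π ∧ ∀ r, IsAGraph (A r) (d r) ((Γ.quot' π).mono r) :=
  ⟨Γ.isCongruence'_of_compatible π hψ h, fun r =>
    isAGraph_of_injOn (F := fun x => ψ ⟨x, Set.mem_univ x⟩) (σ.2 r) (hA r)
      (fun _ _ _ _ hxy => congrArg Subtype.val (hψ hxy))
      (fun _ a b ⟨hr, hab⟩ => hr ▸ h _ ⟨a, Set.mem_univ a⟩ ⟨b, Set.mem_univ b⟩ hab)⟩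

section Counting

variable {W : Type} {s N : ℕ} (Δ : CGraph W s)

theorem card_compatible_perm_eq (A : Set ℕ) {f g : Δ.verts → Fin N} (hf : Injective f)
    (hg : Injective g) :
    Nat.card {τ // τ ∈ permSet A N ∧ Δ.Compatible (fun _ => τ) f} =
      Nat.card {τ // τ ∈ permSet A N ∧ Δ.Compatible (fun _ => τ) g} := by
  obtain ⟨θ, hθ⟩ := Perm.exists_apply_eq_of_injective hf hg
  obtain rfl : g = θ ∘ f := funext fun x => (hθ x).symm
  exact Nat.card_congr ((MulAut.conj θ).toEquiv.subtypeEquiv fun τ =>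
    (and_congr (conj_mem_permSet_iff θ) (Δ.compatible_conj_iff θ _ f)).symm)

theorem pGraph_eq_card_div (A : Set ℕ) {f : Δ.verts → Fin N} (hf : Injective f) :
    pGraph A N Δ =
      Nat.card {τ // τ ∈ permSet A N ∧ Δ.Compatible (fun _ => τ) f} / Nat.card (permSet A N) := by
  have := Δ.finite.to_subtype
  have := Fintype.ofFinite {g : Δ.verts → Fin N // Injective g}
  have hpairs : Nat.card {q : (Δ.verts → Fin N) × Perm (Fin N) //
      Injective q.1 ∧ q.2 ∈ permSet A N ∧ Δ.Compatible (fun _ => q.2) q.1} =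
      Nat.card {g : Δ.verts → Fin N // Injective g} *
        Nat.card {τ // τ ∈ permSet A N ∧ Δ.Compatible (fun _ => τ) f} := by
    rw [Nat.card_congr
      { toFun := fun q => (⟨⟨q.1.1, q.2.1⟩, q.1.2, q.2.2⟩ :
          Σ g : {g : Δ.verts → Fin N // Injective g},
            {τ // τ ∈ permSet A N ∧ Δ.Compatible (fun _ => τ) g.1})
        invFun := fun x => ⟨(x.1.1, x.2.1), x.1.2, x.2.2⟩
        left_inv := fun _ => rfl
        right_inv := fun _ => rfl }, Nat.card_sigma,
      Finset.sum_congr rfl fun g _ => card_compatible_perm_eq Δ A g.2 hf,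
      Finset.sum_const, Finset.card_univ, smul_eq_mul, ← Nat.card_eq_fintype_card]
  have hinj : (Nat.card {g : Δ.verts → Fin N // Injective g} : ℝ) ≠ 0 :=
    Nat.cast_ne_zero.2 (Nat.card_pos_iff.2 ⟨⟨⟨f, hf⟩⟩, inferInstance⟩).ne'
  change (Nat.card {q : (Δ.verts → Fin N) × Perm (Fin N) //
      Injective q.1 ∧ q.2 ∈ permSet A N ∧ Δ.Compatible (fun _ => q.2) q.1} : ℝ) / _ = _
  rw [hpairs, Nat.cast_mul, mul_div_mul_left _ _ hinj]

variable (A : Fin s → Set ℕ)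

theorem card_compatible_permTuple_eq_prod (ψ : Δ.verts → Fin N) :
    Nat.card {σ : PermTuple A N // Δ.Compatible σ.1 ψ} =
      ∏ r, Nat.card {τ // τ ∈ permSet (A r) N ∧ (Δ.mono r).Compatible (fun _ => τ) ψ} := by
  rw [← Nat.card_pi]
  refine Nat.card_congr ((Equiv.subtypeSubtypeEquivSubtypeInter
    (fun σ : Fin s → Perm (Fin N) => ∀ r, σ r ∈ permSet (A r) N) (Δ.Compatible · ψ)).trans
    ((Equiv.subtypeEquivRight fun σ => ?_).trans Equiv.subtypePiEquivPi))
  rw [Δ.compatible_iff_forall_mono, ← forall_and]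

open Classical in
theorem sum_card_injective_compatible_div :
    ((∑ σ : PermTuple A N, Nat.card {ψ : Δ.verts → Fin N // Injective ψ ∧ Δ.Compatible σ.1 ψ} :
        ℕ) : ℝ) / ∏ r, (Nat.card (permSet (A r) N) : ℝ) =
      N.descFactorial (Nat.card Δ.verts) * ∏ r, pGraph (A r) N (Δ.mono r) := by
  have := Δ.finite.to_subtype
  have := Fintype.ofFinite {ψ : Δ.verts → Fin N // Injective ψ}
  have hswap : ∑ σ : PermTuple A N,
      Nat.card {ψ : Δ.verts → Fin N // Injective ψ ∧ Δ.Compatible σ.1 ψ} =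
      ∑ ψ : {ψ : Δ.verts → Fin N // Injective ψ},
        Nat.card {σ : PermTuple A N // Δ.Compatible σ.1 ψ} := by
    rw [← sum_card_subtype_comm
      fun (σ : PermTuple A N) (ψ : {ψ : Δ.verts → Fin N // Injective ψ}) => Δ.Compatible σ.1 ψ.1]
    exact Finset.sum_congr rfl fun σ _ => Nat.card_congr
      (Equiv.subtypeSubtypeEquivSubtypeInter Injective (Δ.Compatible σ.1)).symm
  rw [← card_injective_eq_descFactorial, hswap]
  rcases isEmpty_or_nonempty {ψ : Δ.verts → Fin N // Injective ψ} with hI | hI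
  · simp
  · obtain ⟨ψ₀⟩ := hI
    have hcount : ∀ ψ : {ψ : Δ.verts → Fin N // Injective ψ},
        Nat.card {σ : PermTuple A N // Δ.Compatible σ.1 ψ} =
          Nat.card {σ : PermTuple A N // Δ.Compatible σ.1 ψ₀} := fun ψ => by
      simp only [card_compatible_permTuple_eq_prod]
      exact Finset.prod_congr rfl fun r _ => card_compatible_perm_eq (Δ.mono r) (A r) ψ.2 ψ₀.2
    rw [Finset.sum_congr rfl fun ψ _ => hcount ψ, Finset.sum_const, Finset.card_univ,
      ← Nat.card_eq_fintype_card, smul_eq_mul, card_compatible_permTuple_eq_prod,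
      Finset.prod_congr rfl fun r _ => pGraph_eq_card_div (Δ.mono r) (A r) (f := ψ₀.1) ψ₀.2,
      Finset.prod_div_distrib, Nat.cast_mul, Nat.cast_prod]
    ring

end Counting

open Classical in
theorem sum_card_compatible_div_eq_finsum {V : Type} {s N : ℕ} {A : Fin s → Set ℕ}
    {d : Fin s → ℕ∞} (hA : ∀ r, ∀ m ∈ A r, (m : ℕ∞) ≤ d r) (Γ : CGraph V s) :
    ((∑ σ : PermTuple A N, Nat.card {φ // Γ.Compatible σ.1 φ} : ℕ) : ℝ) /
        ∏ r, (Nat.card (permSet (A r) N) : ℝ) =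
      ∑ᶠ q : {π : Setoid Γ.verts // Γ.IsCongruence' π ∧
          ∀ r, IsAGraph (A r) (d r) ((Γ.quot' π).mono r)},
        (N.descFactorial (Nat.card (Quotient q.1)) : ℝ) *
          ∏ r, pGraph (A r) N ((Γ.quot' q.1).mono r) := by
  have := Γ.finite.to_subtype
  have := Fintype.ofFinite (Setoid Γ.verts)
  simp_rw [Γ.card_compatible_eq_sum_quot']
  rw [Finset.sum_comm, Nat.cast_sum, Finset.sum_div, finsum_eq_sum_of_fintype,
    ← Fintype.sum_subtype_add_sum_subtype (fun π => Γ.IsCongruence' π ∧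
      ∀ r, IsAGraph (A r) (d r) ((Γ.quot' π).mono r))]
  have hvanish : ∀ π : {π : Setoid Γ.verts // ¬(Γ.IsCongruence' π ∧
      ∀ r, IsAGraph (A r) (d r) ((Γ.quot' π).mono r))}, ∀ σ : PermTuple A N,
      Nat.card {ψ // Injective ψ ∧ (Γ.quot' π).Compatible σ.1 ψ} = 0 := fun π σ =>
    Nat.card_eq_zero.2 (.inl ⟨fun ψ =>
      π.2 (isCongruence'_and_isAGraph_of_compatible hA Γ π ψ.2.1 ψ.2.2)⟩)
  simp only [hvanish, Finset.sum_const_zero, Nat.cast_zero, zero_div, add_zero]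
  refine Fintype.sum_congr _ _ fun π => ?_
  rw [sum_card_injective_compatible_div]
  congr 3
  exact Nat.card_univ

theorem prod_ntr_Uword_eq {V : Type} {s n N : ℕ} {w : Fin n → List (Fin s × Bool)}
    {hw : ∀ a, w a ≠ []} {Γ : CGraph V s} {Γc : Fin n → CGraph V s}
    (hcomp : ∀ a, (Γc a).IsComponent Γ)
    (hdisj : ∀ a b, a ≠ b → Disjoint (Γc a).verts (Γc b).verts)
    (hcover : Γ.verts = ⋃ a, (Γc a).verts)
    (hiso : ∀ a, CGraph.Iso (Γc a) (wordGraph (w a) (hw a))) (σ : Fin s → Perm (Fin N)) :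
    ∏ a, ntr (Uword N σ (w a)) = (Nat.card {φ // Γ.Compatible σ φ} : ℂ) / (N : ℂ) ^ n := by
  have hword : ∀ a, ntr (Uword N σ (w a)) = (Nat.card {φ // (Γc a).Compatible σ φ} : ℂ) / N :=
    fun a => by
      rw [ntr, Uword_eq_permMat, trace_permMat, ← CGraph.card_compatible_wordGraph (w a) (hw a),
        (hiso a).card_compatible]
  rw [Finset.prod_congr rfl fun a _ => hword a, Finset.prod_div_distrib, Finset.prod_const,
    Finset.card_univ, Fintype.card_fin,
    CGraph.card_compatible_eq_prod_components hcomp hdisj hcover, Nat.cast_prod]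

theorem expectation_trace_product_formula_general
    (s : ℕ) (d : Fin s → ℕ∞)
    (A : Fin s → Set ℕ)
    (hAsup : ∀ r, (∀ m ∈ A r, (m : ℕ∞) ≤ d r) ∧
      ∀ e : ℕ∞, (∀ m ∈ A r, (m : ℕ∞) ≤ e) → d r ≤ e)
    (n N : ℕ)
    (w : Fin n → List (Fin s × Bool)) (hw : ∀ a, w a ≠ [])
    {V : Type} (Γ : CGraph V s) (Γc : Fin n → CGraph V s)
    (hcomp : ∀ a, (Γc a).IsComponent Γ)
    (hdisj : ∀ a b, a ≠ b → Disjoint (Γc a).verts (Γc b).verts)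
    (hcover : Γ.verts = ⋃ a, (Γc a).verts)
    (hiso : ∀ a, CGraph.Iso (Γc a) (wordGraph (w a) (hw a))) :
    EE A N (fun σ => ∏ a, ntr (Uword N σ (w a))) =
      ((((1 : ℝ) / (N : ℝ) ^ n) *
        ∑ᶠ q : {π : Setoid ↥Γ.verts // Γ.IsCongruence' π ∧
            ∀ r, IsAGraph (A r) (d r) ((Γ.quot' π).mono r)},
          ((N.descFactorial (Nat.card (Quotient q.1)) : ℝ) *
            ∏ r, pGraph (A r) N ((Γ.quot' q.1).mono r)) : ℝ) : ℂ) := by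
  classical
  rw [← sum_card_compatible_div_eq_finsum (fun r => (hAsup r).1) Γ, EE,
    finsum_eq_sum_of_fintype]
  simp_rw [prod_ntr_Uword_eq hcomp hdisj hcover hiso]
  rw [← Finset.sum_div]
  push_cast
  ring

/-- The expectation of a product of normalized traces of words in independent
uniformly random permutation matrices with cycle lengths restricted to
`A_1,…,A_s` is `(1/N^n) Σ_{π ∈ C(Γ)} [N!/(N−|π|)!] Π_r p_N^{(A_r)}((Γ/π)(r))`,
where `Γ` is any graph with `n` distinct connected components isomorphic to the
word-graphs `Γ_{w_1},…,Γ_{w_n}` and `C(Γ)` is the set of congruences `π` of `Γ`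
with `(Γ/π)(r)` an `A_r`-graph for every `r`. -/
theorem expectation_trace_product_formula
    (s : ℕ) (hs : 0 < s) (d : Fin s → ℕ∞) (hd : ∀ r, 1 ≤ d r)
    (A : Fin s → Set ℕ)
    (hAne : ∀ r, (A r).Nonempty) (hApos : ∀ r, ∀ m ∈ A r, 0 < m)
    (hAsup : ∀ r, (∀ m ∈ A r, (m : ℕ∞) ≤ d r) ∧
      ∀ e : ℕ∞, (∀ m ∈ A r, (m : ℕ∞) ≤ e) → d r ≤ e)
    (hAcond : ∀ r, (A r).Finite ∨
      Summable (((A r)ᶜ : Set ℕ).indicator fun j => (1 : ℝ) / j))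
    (n N : ℕ) (hn : 0 < n) (hN : 0 < N)
    (w : Fin n → List (Fin s × Bool)) (hw : ∀ a, w a ≠ [])
    {V : Type} (Γ : CGraph V s) (Γc : Fin n → CGraph V s)
    (hcomp : ∀ a, (Γc a).IsComponent Γ)
    (hdisj : ∀ a b, a ≠ b → Disjoint (Γc a).verts (Γc b).verts)
    (hcover : Γ.verts = ⋃ a, (Γc a).verts)
    (hiso : ∀ a, CGraph.Iso (Γc a) (wordGraph (w a) (hw a)))
    (hSne : ∀ r, (permSet (A r) N).Nonempty) :
    EE A N (fun σ => ∏ a, ntr (Uword N σ (w a))) =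
      ((((1 : ℝ) / (N : ℝ) ^ n) *
        ∑ᶠ q : {π : Setoid ↥Γ.verts // Γ.IsCongruence' π ∧
            ∀ r, IsAGraph (A r) (d r) ((Γ.quot' π).mono r)},
          ((N.descFactorial (Nat.card (Quotient q.1)) : ℝ) *
            ∏ r, pGraph (A r) N ((Γ.quot' q.1).mono r)) : ℝ) : ℂ) :=
  expectation_trace_product_formula_general s d A hAsup n N w hw Γ Γc hcomp hdisj hcover hiso
end
end
end

section
/- Let (Ω, ℱ, P) be a probability space, let λ ∈ ℂ, and let (f_k)_{k≥1} be a sequence of complex-valued integrable random variables on (Ω, ℱ, P) such that lim_{k→∞} E(f_k) = λ and Σ_{k=1}^∞ [ E(|f_k|²) − |E(f_k)|² ] < ∞. Then lim_{k→∞} f_k = λ almost surely. -/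
/-!
Subtracting the means, `g_k := f_k - E f_k` satisfies `E ‖g_k‖² = E ‖f_k‖² - ‖E f_k‖²`, so the
hypothesis says `Σ_k E ‖g_k‖² < ∞`. By monotone convergence `E Σ_k ‖g_k‖² < ∞`, hence
`Σ_k ‖g_k(ω)‖² < ∞` and in particular `g_k(ω) → 0` for almost every `ω`; adding `E f_k → z`
gives `f_k(ω) → z`.
-/

noncomputable section
open Filter Topology MeasureTheory

section

variable {Ω E : Type*} [MeasurableSpace Ω] {μ : Measure Ω}
  [NormedAddCommGroup E] [InnerProductSpace ℝ E] [CompleteSpace E]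

theorem integral_norm_sub_integral_sq [IsProbabilityMeasure μ] {f : Ω → E} (hf : MemLp f 2 μ) :
    ∫ ω, ‖f ω - ∫ ω', f ω' ∂μ‖ ^ 2 ∂μ = ∫ ω, ‖f ω‖ ^ 2 ∂μ - ‖∫ ω, f ω ∂μ‖ ^ 2 := by
  set m := ∫ ω, f ω ∂μ
  have hf1 : Integrable f μ := hf.integrable one_le_two
  have hf2 : Integrable (fun ω => ‖f ω‖ ^ 2) μ := hf.integrable_norm_pow two_ne_zero
  have hinner : Integrable (fun ω => 2 * inner ℝ (f ω) m) μ := (hf1.inner_const m).const_mul 2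
  have hdiff : Integrable (fun ω => ‖f ω‖ ^ 2 - 2 * inner ℝ (f ω) m) μ := hf2.sub hinner
  simp_rw [norm_sub_sq_real]
  rw [integral_add hdiff (integrable_const _), integral_sub hf2 hinner, integral_const_mul]
  simp_rw [real_inner_comm m]
  rw [integral_inner hf1, real_inner_self_eq_norm_sq, integral_const, probReal_univ, one_smul]
  ring

theorem ae_summable_of_summable_integral {ι : Type*} [Countable ι] {g : ι → Ω → ℝ}
    (hg_nonneg : ∀ k, 0 ≤ g k) (hg : ∀ k, Integrable (g k) μ)
    (hsum : Summable fun k => ∫ ω, g k ω ∂μ) :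
    ∀ᵐ ω ∂μ, Summable fun k => g k ω := by
  have hnorm (k : ι) (ω : Ω) : ‖g k ω‖ = g k ω := Real.norm_of_nonneg (hg_nonneg k ω)
  have hfin : ∑' k, eLpNorm (g k) 1 μ ≠ ⊤ := by
    simp_rw [eLpNorm_one_eq_lintegral_enorm, ← ofReal_integral_norm_eq_lintegral_enorm (hg _),
      hnorm, ← ENNReal.ofReal_tsum_of_nonneg (fun k => integral_nonneg (hg_nonneg k)) hsum]
    exact ENNReal.ofReal_ne_top
  filter_upwards [summable_norm_of_tsum_eLpNorm_ne_top le_rfl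
    (fun k => (hg k).aestronglyMeasurable) hfin] with ω hω
  simpa only [hnorm] using hω

theorem ae_tendsto_sub_integral_of_summable_variance [IsProbabilityMeasure μ] {f : ℕ → Ω → E}
    (hf : ∀ k, MemLp (f k) 2 μ)
    (hsum : Summable fun k => ∫ ω, ‖f k ω‖ ^ 2 ∂μ - ‖∫ ω, f k ω ∂μ‖ ^ 2) :
    ∀ᵐ ω ∂μ, Tendsto (fun k => f k ω - ∫ ω', f k ω' ∂μ) atTop (𝓝 0) := by
  have hdev (k : ℕ) : MemLp (fun ω => f k ω - ∫ ω', f k ω' ∂μ) 2 μ := (hf k).sub (memLp_const _)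
  have hsum_sq : Summable fun k => ∫ ω, ‖f k ω - ∫ ω', f k ω' ∂μ‖ ^ 2 ∂μ := by
    simpa only [integral_norm_sub_integral_sq (hf _)] using hsum
  filter_upwards [ae_summable_of_summable_integral (fun k ω => sq_nonneg _)
    (fun k => (hdev k).integrable_norm_pow two_ne_zero) hsum_sq] with ω hω
  have hsq : Tendsto (fun k => ‖f k ω - ∫ ω', f k ω' ∂μ‖ ^ 2) atTop (𝓝 0) :=
    hω.tendsto_atTop_zero
  rw [tendsto_zero_iff_norm_tendsto_zero]
  simpa using hsq.sqrt

end

/-- If `(f_k)` are integrable complex random variables on a probability space with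
`E(f_k) → z` and `Σ_k [E(|f_k|²) − |E(f_k)|²] < ∞`, then `f_k → z` almost surely. -/
theorem tendsto_ae_of_summable_variance {Ω : Type*} [MeasurableSpace Ω]
    (P : Measure Ω) [IsProbabilityMeasure P] (z : ℂ) (f : ℕ → Ω → ℂ)
    (hint : ∀ k, Integrable (f k) P)
    (hint2 : ∀ k, Integrable (fun ω => ‖f k ω‖ ^ 2) P)
    (hmean : Tendsto (fun k => ∫ ω, f k ω ∂P) atTop (𝓝 z))
    (hsum : Summable fun k =>
      (∫ ω, ‖f k ω‖ ^ 2 ∂P) - ‖∫ ω, f k ω ∂P‖ ^ 2) :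
    ∀ᵐ ω ∂P, Tendsto (fun k => f k ω) atTop (𝓝 z) := by
  have hL2 (k : ℕ) : MemLp (f k) 2 P :=
    (memLp_two_iff_integrable_sq_norm (hint k).aestronglyMeasurable).mpr (hint2 k)
  filter_upwards [ae_tendsto_sub_integral_of_summable_variance hL2 hsum] with ω hω
  simpa using hω.add hmean
end
end
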